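/- arXiv:1610.00510 — 13 statements merged into one kernel-verified Lean document; each statement's English description precedes it below -/
import Mathlib

section
/- Let g : ℝ → ℝ be a bounded continuous function. Then (4!/(2π)⁴) · ∫ g(2 sin((θ₂ − θ₁)/2)) dθ₁dθ₂dθ₃dθ₄ over the ordered region 0 < θ₁ < θ₂ < θ₃ < θ₄ < 2π equals ∫₀² g(z) · (4/(π√(4−z²))) · [1 − 3·arcsin(z/2)·(π − arcsin(z/2))/π²] dz. (That is, the side s₂ = 2 sin((θ₂−θ₁)/2) of a uniform cyclic quadrilateral has density (4/(π√(4−z²)))[1 − 3 arcsin(z/2)(π − arcsin(z/2))/π²] on [0,2].) -/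
/-!
The integrand depends only on the gap `u = θ₂ - θ₁`. The shear
`(u, θ₁, θ₃, θ₄) ↦ (θ₁, θ₁ + u, θ₃, θ₄)` preserves volume, and for fixed `u ∈ (0, 2π)` the other
coordinates range over a sheared simplex of volume `(2π - u)³ / 6`; so the gap has density
`4! (2π - u)³ / (6 (2π)⁴)` on `(0, 2π)`. As `2 sin (u / 2)` is invariant under `u ↦ 2π - u`, folding
onto `(0, π)` and substituting `z = 2 sin (u / 2)` gives the stated density.
-/

open MeasureTheory Real intervalIntegral Set

section Fibred

variable {α β E : Type*} [MeasurableSpace α] [MeasurableSpace β] {μ : Measure α} {ν : Measure β}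
  [SFinite μ] [SFinite ν] [NormedAddCommGroup E] [NormedSpace ℝ E]
  {A : Set α} {S : α → Set β}

theorem setIntegral_fibred (hA : MeasurableSet A)
    (hs : MeasurableSet {p : α × β | p.1 ∈ A ∧ p.2 ∈ S p.1}) {f : α × β → E}
    (hf : IntegrableOn f {p : α × β | p.1 ∈ A ∧ p.2 ∈ S p.1} (μ.prod ν)) :
    ∫ p in {p : α × β | p.1 ∈ A ∧ p.2 ∈ S p.1}, f p ∂μ.prod ν =
      ∫ a in A, ∫ b in S a, f (a, b) ∂ν ∂μ := by
  rw [← MeasureTheory.integral_indicator hs, integral_prod _ (hf.integrable_indicator hs),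
    ← MeasureTheory.integral_indicator hA]
  congr 1; funext a
  by_cases ha : a ∈ A
  · have hSa : Prod.mk a ⁻¹' {p : α × β | p.1 ∈ A ∧ p.2 ∈ S p.1} = S a := by ext; simp [ha]
    rw [indicator_of_mem ha,
      ← MeasureTheory.integral_indicator (hSa ▸ hs.preimage measurable_prodMk_left)]
    congr 1; funext b; by_cases hb : b ∈ S a <;> simp [ha, hb]
  · simp [indicator, ha]

theorem measureReal_fibred (hA : MeasurableSet A)
    (hs : MeasurableSet {p : α × β | p.1 ∈ A ∧ p.2 ∈ S p.1})
    (hfin : μ.prod ν {p : α × β | p.1 ∈ A ∧ p.2 ∈ S p.1} ≠ ⊤) :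
    (μ.prod ν).real {p : α × β | p.1 ∈ A ∧ p.2 ∈ S p.1} = ∫ a in A, ν.real (S a) ∂μ := by
  simpa using setIntegral_fibred hA hs (integrableOn_const hfin (C := (1 : ℝ)))

end Fibred

theorem volume_real_triangle {a b : ℝ} (hab : a ≤ b) :
    volume.real {p : ℝ × ℝ | a < p.1 ∧ p.1 < p.2 ∧ p.2 < b} = (b - a) ^ 2 / 2 := by
  have hset : {p : ℝ × ℝ | a < p.1 ∧ p.1 < p.2 ∧ p.2 < b} =
      {p : ℝ × ℝ | p.1 ∈ Ioo a b ∧ p.2 ∈ Ioo p.1 b} := by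
    ext p; simp only [mem_ofPred_eq, mem_Ioo]; grind
  have hsub : {p : ℝ × ℝ | p.1 ∈ Ioo a b ∧ p.2 ∈ Ioo p.1 b} ⊆ Icc (a, a) (b, b) := by
    rintro p ⟨⟨h1, h2⟩, h3, h4⟩; simp only [mem_Icc, Prod.le_def]; and_intros <;> linarith
  rw [hset, Measure.volume_eq_prod, measureReal_fibred (S := fun x => Ioo x b) measurableSet_Ioo
    (by measurability) ((measure_mono hsub).trans_lt isCompact_Icc.measure_lt_top).ne]
  calc ∫ x in Ioo a b, volume.real (Ioo x b) = ∫ x in a..b, (b - x) := by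
        rw [integral_of_le hab, integral_Ioc_eq_integral_Ioo]
        exact setIntegral_congr_fun measurableSet_Ioo fun x hx => volume_real_Ioo_of_le hx.2.le
    _ = (b - a) ^ 2 / 2 := by
      rw [intervalIntegral.integral_comp_sub_left (fun x => x), integral_id]; ring

theorem volume_real_gapped_simplex {b c : ℝ} (hcb : c ≤ b) :
    volume.real {q : ℝ × ℝ × ℝ | 0 < q.1 ∧ q.1 + c < q.2.1 ∧ q.2.1 < q.2.2 ∧ q.2.2 < b} =
      (b - c) ^ 3 / 6 := by
  have hset : {q : ℝ × ℝ × ℝ | 0 < q.1 ∧ q.1 + c < q.2.1 ∧ q.2.1 < q.2.2 ∧ q.2.2 < b} =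
      {q : ℝ × ℝ × ℝ | q.1 ∈ Ioo 0 (b - c) ∧
        q.2 ∈ {r : ℝ × ℝ | q.1 + c < r.1 ∧ r.1 < r.2 ∧ r.2 < b}} := by
    ext q; simp only [mem_ofPred_eq, mem_Ioo]; grind
  have hsub : {q : ℝ × ℝ × ℝ | q.1 ∈ Ioo 0 (b - c) ∧
        q.2 ∈ {r : ℝ × ℝ | q.1 + c < r.1 ∧ r.1 < r.2 ∧ r.2 < b}} ⊆
        Icc (0, c, c) (b - c, b, b) := by
    rintro q ⟨⟨h1, h2⟩, h3, h4, h5⟩; simp only [mem_Icc, Prod.le_def]; and_intros <;> linarith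
  rw [hset, Measure.volume_eq_prod,
    measureReal_fibred (S := fun x => {r : ℝ × ℝ | x + c < r.1 ∧ r.1 < r.2 ∧ r.2 < b})
      measurableSet_Ioo (by measurability)
      ((measure_mono hsub).trans_lt isCompact_Icc.measure_lt_top).ne]
  calc ∫ x in Ioo 0 (b - c), volume.real {r : ℝ × ℝ | x + c < r.1 ∧ r.1 < r.2 ∧ r.2 < b}
      = ∫ x in 0..(b - c), (b - c - x) ^ 2 / 2 := by
        rw [integral_of_le (sub_nonneg.2 hcb), integral_Ioc_eq_integral_Ioo]
        refine setIntegral_congr_fun measurableSet_Ioo fun x hx => ?_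
        rw [volume_real_triangle (by linarith [hx.2])]; ring
    _ = (b - c) ^ 3 / 6 := by
      rw [intervalIntegral.integral_comp_sub_left (fun x => x ^ 2 / 2),
        intervalIntegral.integral_div, integral_pow]
      ring

def gapShear : ℝ × ℝ × ℝ × ℝ ≃ᵐ ℝ × ℝ × ℝ × ℝ :=
  (MeasurableEquiv.prodAssoc.symm.trans
    ((MeasurableEquiv.prodComm.trans (MeasurableEquiv.shearAddRight ℝ)).prodCongr
      (MeasurableEquiv.refl _))).trans MeasurableEquiv.prodAssoc

@[simp]
theorem gapShear_apply (p : ℝ × ℝ × ℝ × ℝ) : gapShear p = (p.2.1, p.2.1 + p.1, p.2.2) := rfl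

theorem measurePreserving_gapShear : MeasurePreserving gapShear := by
  have assoc := volume_preserving_prodAssoc (α₁ := ℝ) (β₁ := ℝ) (γ₁ := ℝ × ℝ)
  exact (assoc.comp ((measurePreserving_prod_add_swap volume volume).prod
    (MeasurePreserving.id volume))).comp (assoc.symm MeasurableEquiv.prodAssoc)

theorem setIntegral_ordered_quadruple_comp_gap {h : ℝ → ℝ} (hh : Continuous h) {T : ℝ}
    (hT : 0 ≤ T) :
    ∫ p in {p : ℝ × ℝ × ℝ × ℝ |
        0 < p.1 ∧ p.1 < p.2.1 ∧ p.2.1 < p.2.2.1 ∧ p.2.2.1 < p.2.2.2 ∧ p.2.2.2 < T},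
      h (p.2.1 - p.1) = ∫ u in 0..T, (T - u) ^ 3 / 6 * h u := by
  set D : ℝ → Set (ℝ × ℝ × ℝ) :=
    fun u => {q | 0 < q.1 ∧ q.1 + u < q.2.1 ∧ q.2.1 < q.2.2 ∧ q.2.2 < T}
  have hpre : gapShear ⁻¹' {p : ℝ × ℝ × ℝ × ℝ |
        0 < p.1 ∧ p.1 < p.2.1 ∧ p.2.1 < p.2.2.1 ∧ p.2.2.1 < p.2.2.2 ∧ p.2.2.2 < T} =
      {p | p.1 ∈ Ioo 0 T ∧ p.2 ∈ D p.1} := by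
    ext p; simp only [D, mem_preimage, gapShear_apply, mem_ofPred_eq, mem_Ioo]; grind
  have hsub : {p : ℝ × ℝ × ℝ × ℝ | p.1 ∈ Ioo 0 T ∧ p.2 ∈ D p.1} ⊆ Icc 0 (T, T, T, T) := by
    rintro p ⟨⟨h1, h2⟩, h3, h4, h5, h6⟩
    simp only [mem_Icc, Prod.le_def, Prod.fst_zero, Prod.snd_zero]; and_intros <;> linarith
  have hint : IntegrableOn (fun p : ℝ × ℝ × ℝ × ℝ => h p.1) {p | p.1 ∈ Ioo 0 T ∧ p.2 ∈ D p.1}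
      (volume.prod volume) :=
    ((hh.comp continuous_fst).continuousOn.integrableOn_compact isCompact_Icc).mono_set hsub
  rw [← measurePreserving_gapShear.setIntegral_preimage_emb gapShear.measurableEmbedding, hpre]
  simp only [gapShear_apply, add_sub_cancel_left]
  rw [Measure.volume_eq_prod, setIntegral_fibred measurableSet_Ioo (by measurability) hint,
    integral_of_le hT, integral_Ioc_eq_integral_Ioo]
  refine setIntegral_congr_fun measurableSet_Ioo fun u hu => ?_
  rw [setIntegral_const (h u), volume_real_gapped_simplex hu.2.le, smul_eq_mul]

theorem integral_zero_two_mul_eq_integral_add_reflect {f : ℝ → ℝ} (hf : Continuous f) (a : ℝ) :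
    ∫ x in 0..2 * a, f x = ∫ x in 0..a, (f x + f (2 * a - x)) := by
  rw [integral_add (g := fun x => f (2 * a - x)) (hf.intervalIntegrable _ _)
      ((hf.comp (continuous_const.sub continuous_id)).intervalIntegrable _ _),
    intervalIntegral.integral_comp_sub_left f, two_mul, add_sub_cancel_right, sub_zero,
    integral_add_adjacent_intervals (hf.intervalIntegrable _ _) (hf.intervalIntegrable _ _)]

theorem strictMonoOn_two_sin_half : StrictMonoOn (fun u : ℝ => 2 * sin (u / 2)) (Icc (-π) π) :=
  fun x hx y hy hxy => by
    have := strictMonoOn_sin (a := x / 2) (b := y / 2) ⟨by linarith [hx.1], by linarith [hx.2]⟩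
      ⟨by linarith [hy.1], by linarith [hy.2]⟩ (by linarith)
    simp only; linarith

theorem image_two_sin_half_Ioo :
    (fun u : ℝ => 2 * sin (u / 2)) '' Ioo 0 π = Ioo 0 2 := by
  ext z
  constructor
  · rintro ⟨u, ⟨hu0, huπ⟩, rfl⟩
    have hu : u ∈ Icc (-π) π := ⟨by linarith, huπ.le⟩
    have h0 := strictMonoOn_two_sin_half ⟨by linarith [pi_pos], pi_pos.le⟩ hu hu0
    have hπ := strictMonoOn_two_sin_half hu ⟨by linarith [pi_pos], le_rfl⟩ huπ
    simp only [zero_div, sin_zero, mul_zero, sin_pi_div_two, mul_one] at h0 hπ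
    exact ⟨h0, hπ⟩
  · rintro ⟨hz0, hz2⟩
    refine ⟨2 * arcsin (z / 2), ⟨?_, ?_⟩, ?_⟩
    · linarith [arcsin_pos.2 (by linarith : (0:ℝ) < z / 2)]
    · linarith [arcsin_lt_pi_div_two.2 (by linarith : z / 2 < 1)]
    · show 2 * sin (2 * arcsin (z / 2) / 2) = z
      rw [mul_div_cancel_left₀ _ two_ne_zero, sin_arcsin (by linarith) (by linarith)]; ring

theorem integral_zero_two_eq_integral_two_sin_half (F : ℝ → ℝ) :
    ∫ z in 0..2, F z = ∫ u in Ioo 0 π, cos (u / 2) * F (2 * sin (u / 2)) := by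
  have hderiv (u : ℝ) : HasDerivAt (fun u : ℝ => 2 * sin (u / 2)) (cos (u / 2)) u :=
    (((hasDerivAt_id' u).div_const 2).sin.const_mul 2).congr_deriv (by ring)
  rw [integral_of_le zero_le_two, integral_Ioc_eq_integral_Ioo, ← image_two_sin_half_Ioo,
    integral_image_eq_integral_abs_deriv_smul measurableSet_Ioo
      (fun u _ => (hderiv u).hasDerivWithinAt)
      (strictMonoOn_two_sin_half.injOn.mono (Ioo_subset_Icc_self.trans
        (Icc_subset_Icc_left (by linarith [pi_pos]))))]
  refine setIntegral_congr_fun measurableSet_Ioo fun u hu => ?_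
  rw [smul_eq_mul,
    abs_of_pos (cos_pos_of_mem_Ioo ⟨by linarith [hu.1, pi_pos], by linarith [hu.2]⟩)]

noncomputable def sideDensity (z : ℝ) : ℝ :=
  4 / (π * √(4 - z ^ 2)) * (1 - 3 * arcsin (z / 2) * (π - arcsin (z / 2)) / π ^ 2)

theorem cos_mul_sideDensity_two_sin_half {u : ℝ} (hu : u ∈ Ioo 0 π) :
    cos (u / 2) * sideDensity (2 * sin (u / 2)) =
      4 * ((2 * π - u) ^ 3 + u ^ 3) / (2 * π) ^ 4 := by
  have hcos : 0 < cos (u / 2) :=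
    cos_pos_of_mem_Ioo ⟨by linarith [hu.1, pi_pos], by linarith [hu.2]⟩
  have hsqrt : √(4 - (2 * sin (u / 2)) ^ 2) = 2 * cos (u / 2) := by
    rw [show 4 - (2 * sin (u / 2)) ^ 2 = (2 * cos (u / 2)) ^ 2 by
      nlinarith [sin_sq_add_cos_sq (u / 2)], sqrt_sq (by linarith)]
  have harcsin : arcsin (2 * sin (u / 2) / 2) = u / 2 := by
    rw [mul_div_cancel_left₀ _ two_ne_zero]
    exact arcsin_sin (by linarith [hu.1, pi_pos]) (by linarith [hu.2])
  rw [sideDensity, hsqrt, harcsin]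
  field_simp
  ring

theorem side_s2_density_general (g : ℝ → ℝ) (hg : Continuous g) :
    ((Nat.factorial 4 : ℝ) / (2 * π) ^ 4) * ∫ p in {p : ℝ × ℝ × ℝ × ℝ |
        0 < p.1 ∧ p.1 < p.2.1 ∧ p.2.1 < p.2.2.1 ∧ p.2.2.1 < p.2.2.2 ∧ p.2.2.2 < 2 * π},
      g (2 * Real.sin ((p.2.1 - p.1) / 2)) =
    ∫ z in (0:ℝ)..2, g z * (4 / (π * Real.sqrt (4 - z ^ 2))) *
      (1 - 3 * Real.arcsin (z / 2) * (π - Real.arcsin (z / 2)) / π ^ 2) := by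
  set h : ℝ → ℝ := fun u => g (2 * sin (u / 2))
  have hh : Continuous h := by fun_prop
  have h_reflect (u : ℝ) : h (2 * π - u) = h u := by
    simp only [h]
    rw [show (2 * π - u) / 2 = π - u / 2 by ring, sin_pi_sub]
  rw [setIntegral_ordered_quadruple_comp_gap hh two_pi_pos.le,
    integral_zero_two_mul_eq_integral_add_reflect (by fun_prop), integral_of_le pi_pos.le,
    integral_Ioc_eq_integral_Ioo, ← MeasureTheory.integral_const_mul]
  simp_rw [mul_assoc (g _), ← sideDensity.eq_1]
  rw [integral_zero_two_eq_integral_two_sin_half]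
  refine setIntegral_congr_fun measurableSet_Ioo fun u hu => ?_
  rw [h_reflect, mul_left_comm, cos_mul_sideDensity_two_sin_half hu]
  simp only [h, Nat.factorial]
  ring

theorem side_s2_density (g : ℝ → ℝ) (hg : Continuous g)
    (hb : ∃ C, ∀ x, |g x| ≤ C) :
    ((Nat.factorial 4 : ℝ) / (2 * π) ^ 4) * ∫ p in {p : ℝ × ℝ × ℝ × ℝ |
        0 < p.1 ∧ p.1 < p.2.1 ∧ p.2.1 < p.2.2.1 ∧ p.2.2.1 < p.2.2.2 ∧ p.2.2.2 < 2 * π},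
      g (2 * Real.sin ((p.2.1 - p.1) / 2)) =
    ∫ z in (0:ℝ)..2, g z * (4 / (π * Real.sqrt (4 - z ^ 2))) *
      (1 - 3 * Real.arcsin (z / 2) * (π - Real.arcsin (z / 2)) / π ^ 2) :=
  side_s2_density_general g hg
end

section
/- Let g : ℝ → ℝ be a bounded continuous function. Then (4!/(2π)⁴) · ∫ g(2 sin((θ₃ − θ₁)/2)) dθ₁dθ₂dθ₃dθ₄ over the ordered region 0 < θ₁ < θ₂ < θ₃ < θ₄ < 2π equals ∫₀² g(z) · (12/(π√(4−z²))) · arcsin(z/2)·(π − arcsin(z/2))/π² dz. (That is, the diagonal d₂ = 2 sin((θ₃−θ₁)/2) of a uniform cyclic quadrilateral has density (12/(π√(4−z²))) arcsin(z/2)(π − arcsin(z/2))/π² on [0,2].) -/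
/-!
Integrating out `θ₂ ∈ (θ₁, θ₃)` and `θ₄ ∈ (θ₃, 2π)` leaves the weight `(θ₃ - θ₁)(2π - θ₃)` on
`0 < θ₁ < θ₃ < 2π`; integrating `θ₁` at fixed gap `u = θ₃ - θ₁` then gives the weight
`u (2π - u)² / 2` on `(0, 2π)`. Since `sin (u / 2)` is invariant under `u ↦ 2π - u`, folding
`(π, 2π)` onto `(0, π)` turns this weight into `π u (2π - u)`, and the substitution
`z = 2 sin (u / 2)`, with `√(4 - z²) = 2 cos (u / 2)` and `arcsin (z / 2) = u / 2`, yields the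
stated density on `(0, 2)`.
-/

open MeasureTheory Real intervalIntegral

open Set

namespace MeasurableEquiv

variable (α β γ δ : Type*) [MeasurableSpace α] [MeasurableSpace β] [MeasurableSpace γ]
  [MeasurableSpace δ]

def prodProdProdComm : (α × β) × γ × δ ≃ᵐ (α × γ) × β × δ where
  toEquiv := Equiv.prodProdProdComm α β γ δ
  measurable_toFun := by dsimp [Equiv.prodProdProdComm]; fun_prop
  measurable_invFun := by dsimp [Equiv.prodProdProdComm]; fun_prop

end MeasurableEquiv

theorem MeasureTheory.measurePreserving_prodProdProdComm {α β γ δ : Type*} [MeasurableSpace α]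
    [MeasurableSpace β] [MeasurableSpace γ] [MeasurableSpace δ] (μa : Measure α) (μb : Measure β)
    (μc : Measure γ) (μd : Measure δ) [SFinite μa] [SFinite μb] [SFinite μc] [SFinite μd] :
    MeasurePreserving (MeasurableEquiv.prodProdProdComm α β γ δ)
      ((μa.prod μb).prod (μc.prod μd)) ((μa.prod μc).prod (μb.prod μd)) :=
  (measurePreserving_prodAssoc μa μc (μb.prod μd)).symm.comp
    (((MeasurePreserving.id μa).prod (measurePreserving_prodAssoc μc μb μd)).comp
      (((MeasurePreserving.id μa).prod
        ((Measure.measurePreserving_swap (μ := μb) (ν := μc)).prod (MeasurePreserving.id μd))).comp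
        (((MeasurePreserving.id μa).prod (measurePreserving_prodAssoc μb μc μd).symm).comp
          (measurePreserving_prodAssoc μa μb (μc.prod μd)))))

theorem integrable_indicator_of_subset_isCompact {X E : Type*} [TopologicalSpace X] [T2Space X]
    [MeasurableSpace X] [OpensMeasurableSpace X] [NormedAddCommGroup E] {μ : Measure X}
    [IsFiniteMeasureOnCompacts μ] {f : X → E} {s K : Set X} (hK : IsCompact K) (hf : ContinuousOn f K) (hs : MeasurableSet s)
    (hsK : s ⊆ K) : Integrable (s.indicator f) μ :=
  ((hf.integrableOn_compact hK).mono_set hsK).integrable_indicator hs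

theorem setIntegral_Ioo_const_mul_sub (k : ℝ) {L : ℝ} (hL : 0 ≤ L) :
    ∫ a in Ioo 0 L, k * (L - a) = k * (L ^ 2 / 2) := by
  rw [← integral_Ioc_eq_integral_Ioo, ← intervalIntegral.integral_of_le hL,
    intervalIntegral.integral_const_mul, intervalIntegral.integral_sub intervalIntegrable_const
      intervalIntegral.intervalIntegrable_id]
  simp only [intervalIntegral.integral_const, integral_id]
  ring

def orderedQuadruples (c : ℝ) : Set (ℝ × ℝ × ℝ × ℝ) :=
  {p | 0 < p.1 ∧ p.1 < p.2.1 ∧ p.2.1 < p.2.2.1 ∧ p.2.2.1 < p.2.2.2 ∧ p.2.2.2 < c}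

def orderedPairs (c : ℝ) : Set (ℝ × ℝ) :=
  {x | 0 < x.1 ∧ x.1 < x.2 ∧ x.2 < c}

theorem measurableSet_orderedQuadruples (c : ℝ) : MeasurableSet (orderedQuadruples c) := by
  unfold orderedQuadruples
  measurability

theorem measurableSet_orderedPairs (c : ℝ) : MeasurableSet (orderedPairs c) := by
  unfold orderedPairs
  measurability

theorem integral_orderedQuadruples_fibre (f : ℝ × ℝ → ℝ) (c : ℝ) (x : ℝ × ℝ) :
    ∫ y : ℝ × ℝ, (orderedQuadruples c).indicator (fun p => f (p.1, p.2.2.1)) (x.1, y.1, x.2, y.2) =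
      (orderedPairs c).indicator (fun x => (x.2 - x.1) * (c - x.2) * f x) x := by
  obtain ⟨a, c'⟩ := x
  by_cases hx : (a, c') ∈ orderedPairs c
  · obtain ⟨ha, hac, hc⟩ := hx
    have hrect : (fun y : ℝ × ℝ =>
          (orderedQuadruples c).indicator (fun p => f (p.1, p.2.2.1)) (a, y.1, c', y.2)) =
        (Ioo a c' ×ˢ Ioo c' c).indicator fun _ => f (a, c') := by
      ext ⟨b, d⟩
      simp [orderedQuadruples, indicator, ha, and_assoc]
    rw [hrect, integral_indicator_const _ (measurableSet_Ioo.prod measurableSet_Ioo),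
      Measure.volume_eq_prod, measureReal_prod_prod, volume_real_Ioo_of_le hac.le,
      volume_real_Ioo_of_le hc.le, indicator_of_mem (show (a, c') ∈ orderedPairs c from
        ⟨ha, hac, hc⟩), smul_eq_mul]
  · rw [indicator_of_notMem hx]
    refine integral_eq_zero_of_ae (Filter.Eventually.of_forall fun y => indicator_of_notMem ?_ _)
    rintro ⟨h₁, h₂, h₃, h₄, h₅⟩
    exact hx ⟨h₁, h₂.trans h₃, h₄.trans h₅⟩

theorem setIntegral_orderedQuadruples (f : ℝ × ℝ → ℝ) (hf : Continuous f) (c : ℝ) :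
    ∫ p in orderedQuadruples c, f (p.1, p.2.2.1) =
      ∫ x in orderedPairs c, (x.2 - x.1) * (c - x.2) * f x := by
  set F := (orderedQuadruples c).indicator fun p => f (p.1, p.2.2.1)
  set G : (ℝ × ℝ) × ℝ × ℝ → ℝ := fun q => F (q.1.1, q.2.1, q.1.2, q.2.2)
  -- regroup `(θ₁, θ₂, θ₃, θ₄)` as `((θ₁, θ₃), (θ₂, θ₄))`: each fibre is then a rectangle
  let σ := (MeasurableEquiv.prodAssoc (α := ℝ) (β := ℝ) (γ := ℝ × ℝ)).symm.trans
    (MeasurableEquiv.prodProdProdComm ℝ ℝ ℝ ℝ)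
  have hσ : MeasurePreserving σ := volume_preserving_prodAssoc.symm.trans
    (measurePreserving_prodProdProdComm volume volume volume volume)
  have hF : Integrable F := by
    refine integrable_indicator_of_subset_isCompact (K := Icc 0 c ×ˢ Icc 0 c ×ˢ Icc 0 c ×ˢ Icc 0 c)
      (isCompact_Icc.prod (isCompact_Icc.prod (isCompact_Icc.prod isCompact_Icc)))
      (by fun_prop) (measurableSet_orderedQuadruples c) ?_
    rintro ⟨a, b, c', d⟩ ⟨h₁, h₂, h₃, h₄, h₅⟩
    simp only [mem_prod, mem_Icc]
    refine ⟨⟨?_, ?_⟩, ⟨?_, ?_⟩, ⟨?_, ?_⟩, ⟨?_, ?_⟩⟩ <;> linarith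
  have hG : Integrable G := (hσ.integrable_comp_emb σ.measurableEmbedding).1 hF
  calc ∫ p in orderedQuadruples c, f (p.1, p.2.2.1) = ∫ p, G (σ p) :=
        (MeasureTheory.integral_indicator (measurableSet_orderedQuadruples c)).symm
    _ = ∫ q, G q := hσ.integral_comp' G
    _ = ∫ x, ∫ y, G (x, y) := integral_prod G hG
    _ = _ := by
        simp only [G, F, integral_orderedQuadruples_fibre]
        exact MeasureTheory.integral_indicator (measurableSet_orderedPairs c)

theorem integral_orderedPairs_shear_fibre (φ : ℝ → ℝ) (c u : ℝ) :
    ∫ a, (orderedPairs c).indicator (fun x => (x.2 - x.1) * (c - x.2) * φ (x.2 - x.1)) (a, a + u) =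
      (Ioo 0 c).indicator (fun u => u * (c - u) ^ 2 / 2 * φ u) u := by
  by_cases hu : u ∈ Ioo 0 c
  · have hfibre : (fun a => (orderedPairs c).indicator
          (fun x => (x.2 - x.1) * (c - x.2) * φ (x.2 - x.1)) (a, a + u)) =
        (Ioo 0 (c - u)).indicator fun a => u * φ u * (c - u - a) := by
      ext a
      by_cases ha : a ∈ Ioo 0 (c - u)
      · rw [indicator_of_mem ha, indicator_of_mem (show (a, a + u) ∈ orderedPairs c from
          ⟨ha.1, by linarith [hu.1], by linarith [ha.2]⟩)]
        simp only [add_sub_cancel_left]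
        ring
      · have haT : (a, a + u) ∉ orderedPairs c := fun ⟨h₁, _, h₃⟩ => ha ⟨h₁, by linarith⟩
        rw [indicator_of_notMem ha, indicator_of_notMem haT]
    rw [hfibre, MeasureTheory.integral_indicator measurableSet_Ioo,
      setIntegral_Ioo_const_mul_sub _ (by linarith [hu.2]), indicator_of_mem hu]
    ring
  · rw [indicator_of_notMem hu]
    refine integral_eq_zero_of_ae (Filter.Eventually.of_forall fun a => indicator_of_notMem ?_ _)
    rintro ⟨h₁, h₂, h₃⟩
    exact hu ⟨by linarith, by linarith⟩

theorem setIntegral_orderedPairs (φ : ℝ → ℝ) (hφ : Continuous φ) {c : ℝ} (hc : 0 ≤ c) :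
    ∫ x in orderedPairs c, (x.2 - x.1) * (c - x.2) * φ (x.2 - x.1) =
      ∫ u in 0..c, u * (c - u) ^ 2 / 2 * φ u := by
  set H := (orderedPairs c).indicator fun x => (x.2 - x.1) * (c - x.2) * φ (x.2 - x.1)
  have hH : Integrable H := by
    refine integrable_indicator_of_subset_isCompact (K := Icc 0 c ×ˢ Icc 0 c)
      (isCompact_Icc.prod isCompact_Icc) (by fun_prop) (measurableSet_orderedPairs c) ?_
    rintro ⟨a, c'⟩ ⟨h₁, h₂, h₃⟩
    exact ⟨⟨h₁.le, by linarith⟩, ⟨by linarith, h₃.le⟩⟩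
  -- the shear `(a, u) ↦ (a, a + u)` turns the gap `x.2 - x.1` into a coordinate
  have hshear := measurePreserving_prod_add (volume : Measure ℝ) volume
  have hshear_emb := (MeasurableEquiv.shearAddRight ℝ).measurableEmbedding
  have hH' : Integrable fun z : ℝ × ℝ => H (z.1, z.1 + z.2) :=
    (hshear.integrable_comp_emb hshear_emb).2 hH
  calc ∫ x in orderedPairs c, (x.2 - x.1) * (c - x.2) * φ (x.2 - x.1) = ∫ x, H x :=
        (MeasureTheory.integral_indicator (measurableSet_orderedPairs c)).symm
    _ = ∫ z : ℝ × ℝ, H (z.1, z.1 + z.2) := (hshear.integral_comp hshear_emb H).symm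
    _ = ∫ u, ∫ a, H (a, a + u) := integral_prod_symm _ hH'
    _ = ∫ u in 0..c, u * (c - u) ^ 2 / 2 * φ u := by
        simp only [H, integral_orderedPairs_shear_fibre]
        rw [MeasureTheory.integral_indicator measurableSet_Ioo, ← integral_Ioc_eq_integral_Ioo,
          intervalIntegral.integral_of_le hc]

theorem integral_mul_sub_sq_of_symm (φ : ℝ → ℝ) (hφ : Continuous φ) {c : ℝ}
    (hsymm : ∀ u, φ (c - u) = φ u) :
    ∫ u in 0..c, u * (c - u) ^ 2 / 2 * φ u = c / 2 * ∫ u in 0..c / 2, u * (c - u) * φ u := by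
  set f : ℝ → ℝ := fun u => u * (c - u) ^ 2 / 2 * φ u
  have hf : Continuous f := by fun_prop
  have hpair : ∀ u, f u + f (c - u) = c / 2 * (u * (c - u) * φ u) := fun u => by
    simp only [f, hsymm, sub_sub_cancel]
    ring
  rw [← intervalIntegral.integral_add_adjacent_intervals (b := c / 2) (hf.intervalIntegrable _ _)
      (hf.intervalIntegrable _ _),
    show ∫ u in c / 2..c, f u = ∫ u in 0..c / 2, f (c - u) by
      rw [intervalIntegral.integral_comp_sub_left, sub_zero, sub_half],
    ← intervalIntegral.integral_add (hf.intervalIntegrable _ _)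
      ((by fun_prop : Continuous fun u => f (c - u)).intervalIntegrable _ _)]
  simp only [hpair, intervalIntegral.integral_const_mul]

theorem integral_div_sqrt_sq_sub_sq (f : ℝ → ℝ) {r : ℝ} (hr : 0 < r) :
    ∫ z in 0..r, f z / √(r ^ 2 - z ^ 2) = ∫ t in 0..π / 2, f (r * sin t) := by
  have hinj : InjOn (fun t => r * sin t) (Ioo 0 (π / 2)) := fun x hx y hy hxy =>
    injOn_sin ⟨by linarith [hx.1, pi_pos], hx.2.le⟩ ⟨by linarith [hy.1, pi_pos], hy.2.le⟩
      (mul_left_cancel₀ hr.ne' hxy)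
  have himage : (fun t => r * sin t) '' Ioo 0 (π / 2) = Ioo 0 r := by
    ext z
    constructor
    · rintro ⟨t, ⟨ht₀, ht₁⟩, rfl⟩
      have hsin : sin t < 1 := by
        simpa using sin_lt_sin_of_lt_of_le_pi_div_two (by linarith [pi_pos]) le_rfl ht₁
      exact ⟨mul_pos hr (sin_pos_of_pos_of_lt_pi ht₀ (by linarith [pi_pos])),
        mul_lt_of_lt_one_right hr hsin⟩
    · rintro ⟨hz₀, hz₁⟩
      refine ⟨arcsin (z / r), ⟨arcsin_pos.2 (by positivity),
        arcsin_lt_pi_div_two.2 ((div_lt_one hr).2 hz₁)⟩, ?_⟩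
      simp only [sin_arcsin (by linarith [div_pos hz₀ hr]) ((div_le_one hr).2 hz₁.le)]
      field_simp
  rw [intervalIntegral.integral_of_le hr.le, integral_Ioc_eq_integral_Ioo, ← himage,
    integral_image_eq_integral_abs_deriv_smul measurableSet_Ioo
      (fun t _ => ((hasDerivAt_sin t).const_mul r).hasDerivWithinAt) hinj,
    intervalIntegral.integral_of_le (by positivity), integral_Ioc_eq_integral_Ioo]
  refine setIntegral_congr_fun measurableSet_Ioo fun t ht => ?_
  have hcos : 0 < cos t := cos_pos_of_mem_Ioo ⟨by linarith [ht.1, pi_pos], ht.2⟩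
  have hsqrt : √(r ^ 2 - (r * sin t) ^ 2) = r * cos t := by
    rw [← sqrt_sq (mul_pos hr hcos).le, mul_pow, mul_pow, cos_sq']
    ring_nf
  simp only [smul_eq_mul, hsqrt, abs_of_pos (mul_pos hr hcos)]
  field_simp

theorem diagonal_d2_density_general (g : ℝ → ℝ) (hg : Continuous g) :
    ((Nat.factorial 4 : ℝ) / (2 * π) ^ 4) * ∫ p in {p : ℝ × ℝ × ℝ × ℝ |
        0 < p.1 ∧ p.1 < p.2.1 ∧ p.2.1 < p.2.2.1 ∧ p.2.2.1 < p.2.2.2 ∧ p.2.2.2 < 2 * π},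
      g (2 * Real.sin ((p.2.2.1 - p.1) / 2)) =
    ∫ z in (0:ℝ)..2, g z * (12 / (π * Real.sqrt (4 - z ^ 2))) *
      (Real.arcsin (z / 2) * (π - Real.arcsin (z / 2)) / π ^ 2) := by
  set φ : ℝ → ℝ := fun u => g (2 * sin (u / 2))
  have hφ : Continuous φ := by fun_prop
  have hsymm : ∀ u, φ (2 * π - u) = φ u := fun u => by
    simp only [φ, show (2 * π - u) / 2 = π - u / 2 by ring, sin_pi_sub]
  have hscale := intervalIntegral.smul_integral_comp_mul_left (a := 0) (b := π / 2)
    (fun u => u * (2 * π - u) * φ u) 2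
  rw [mul_zero, mul_div_cancel₀ π two_ne_zero] at hscale
  set h : ℝ → ℝ := fun z => 12 / π ^ 3 * (arcsin (z / 2) * (π - arcsin (z / 2))) * g z
  calc _ = (Nat.factorial 4 : ℝ) / (2 * π) ^ 4 *
        ∫ u in 0..2 * π, u * (2 * π - u) ^ 2 / 2 * φ u := by
        rw [← setIntegral_orderedPairs φ hφ two_pi_pos.le]
        exact congrArg _ (setIntegral_orderedQuadruples (fun x => φ (x.2 - x.1)) (by fun_prop) _)
    _ = ∫ t in 0..π / 2, h (2 * sin t) := by
        rw [integral_mul_sub_sq_of_symm φ hφ hsymm, mul_div_cancel_left₀ π two_ne_zero, ← hscale,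
          smul_eq_mul, ← intervalIntegral.integral_const_mul, ← intervalIntegral.integral_const_mul,
          ← intervalIntegral.integral_const_mul]
        refine intervalIntegral.integral_congr fun t ht => ?_
        rw [uIcc_of_le (by positivity)] at ht
        simp only [h, φ, mul_div_cancel_left₀ _ (two_ne_zero' ℝ),
          arcsin_sin (by linarith [ht.1, pi_pos]) ht.2]
        norm_num [Nat.factorial]
        field_simp
        ring
    _ = ∫ z in 0..2, h z / √(2 ^ 2 - z ^ 2) := (integral_div_sqrt_sq_sub_sq h two_pos).symm
    _ = _ := by
        refine intervalIntegral.integral_congr fun z _ => ?_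
        simp only [h]
        norm_num
        ring

theorem diagonal_d2_density (g : ℝ → ℝ) (hg : Continuous g)
    (hb : ∃ C, ∀ x, |g x| ≤ C) :
    ((Nat.factorial 4 : ℝ) / (2 * π) ^ 4) * ∫ p in {p : ℝ × ℝ × ℝ × ℝ |
        0 < p.1 ∧ p.1 < p.2.1 ∧ p.2.1 < p.2.2.1 ∧ p.2.2.1 < p.2.2.2 ∧ p.2.2.2 < 2 * π},
      g (2 * Real.sin ((p.2.2.1 - p.1) / 2)) =
    ∫ z in (0:ℝ)..2, g z * (12 / (π * Real.sqrt (4 - z ^ 2))) *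
      (Real.arcsin (z / 2) * (π - Real.arcsin (z / 2)) / π ^ 2) :=
  diagonal_d2_density_general g hg
end

section
/- ∫₀² s · (3/(π√(4−s²))) · [1 − 2·arcsin(s/2)·(π − arcsin(s/2))/π²] ds = 6/π − 24/π³. (That is, the expected length of an arbitrary side of a uniform cyclic quadrilateral is 6/π − 24/π³.) -/
/-! The substitution `s = 2 sin θ`, `θ ∈ (0, π/2)`, turns `√(4 - s²)` into `2 cos θ`, which cancels
the Jacobian, and `arcsin (s / 2)` into `θ`; the integral becomes
`(6/π) ∫₀^{π/2} sin θ (1 - 2θ(π - θ)/π²) dθ = (6/π)(1 - 4/π²)`. -/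

open Real intervalIntegral

open MeasureTheory Set

lemma image_two_mul_sin_Ioo : (fun θ => 2 * sin θ) '' Ioo 0 (π / 2) = Ioo 0 2 := by
  ext s
  constructor
  · rintro ⟨θ, ⟨hθ₀, hθ₁⟩, rfl⟩
    have hsin_pos : 0 < sin θ := sin_pos_of_pos_of_lt_pi hθ₀ (by linarith [pi_pos])
    have hsin_lt : sin θ < 1 := by
      simpa using sin_lt_sin_of_lt_of_le_pi_div_two (by linarith) le_rfl hθ₁
    constructor <;> linarith
  · rintro ⟨hs₀, hs₂⟩
    refine ⟨arcsin (s / 2), ⟨arcsin_pos.2 (by linarith), arcsin_lt_pi_div_two.2 (by linarith)⟩, ?_⟩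
    simp only
    rw [sin_arcsin (by linarith) (by linarith)]
    ring

-- The one-dimensional Jacobian formula needs no integrability, so the singularity of the
-- density at `s = 2` is harmless.
theorem integral_zero_two_eq_of_two_mul_sin {E : Type*} [NormedAddCommGroup E] [NormedSpace ℝ E]
    {g h : ℝ → E} (hgh : ∀ θ ∈ Ioo 0 (π / 2), (2 * cos θ) • g (2 * sin θ) = h θ) :
    ∫ s in (0:ℝ)..2, g s = ∫ θ in (0:ℝ)..π / 2, h θ := by
  have hinj : InjOn (fun θ => 2 * sin θ) (Ioo 0 (π / 2)) := fun x hx y hy hxy =>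
    injOn_sin ⟨by linarith [hx.1, pi_pos], hx.2.le⟩ ⟨by linarith [hy.1, pi_pos], hy.2.le⟩
      (by simpa using hxy)
  rw [integral_of_le zero_le_two, integral_of_le (by positivity), integral_Ioc_eq_integral_Ioo,
    integral_Ioc_eq_integral_Ioo, ← image_two_mul_sin_Ioo,
    integral_image_eq_integral_abs_deriv_smul measurableSet_Ioo
      (fun θ _ => ((hasDerivAt_sin θ).const_mul 2).hasDerivWithinAt) hinj]
  refine setIntegral_congr_fun measurableSet_Ioo fun θ hθ => ?_
  have hcos : 0 < cos θ := cos_pos_of_mem_Ioo ⟨by linarith [hθ.1, pi_pos], hθ.2⟩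
  rw [abs_of_pos (by positivity), ← hgh θ hθ]

theorem integral_sin_mul_quadratic :
    ∫ θ in (0:ℝ)..π / 2, sin θ * (1 - 2 * θ * (π - θ) / π ^ 2) = 1 - 4 / π ^ 2 := by
  have hp (θ : ℝ) :
      HasDerivAt (fun θ : ℝ => 1 - 2 * θ * (π - θ) / π ^ 2) ((4 * θ - 2 * π) / π ^ 2) θ :=
    ((((hasDerivAt_id' θ).const_mul 2).mul ((hasDerivAt_id' θ).const_sub π)).div_const
      (π ^ 2) |>.const_sub 1).congr_deriv (by ring)
  have hp' (θ : ℝ) : HasDerivAt (fun θ : ℝ => (4 * θ - 2 * π) / π ^ 2) (4 / π ^ 2) θ :=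
    ((((hasDerivAt_id' θ).const_mul 4).sub_const (2 * π)).div_const (π ^ 2)).congr_deriv
      (by ring)
  -- for quadratic `p`, `p sin` has antiderivative `(p'' - p) cos + p' sin`
  have hG (θ : ℝ) : HasDerivAt (fun θ => (4 / π ^ 2 - (1 - 2 * θ * (π - θ) / π ^ 2)) * cos θ
      + (4 * θ - 2 * π) / π ^ 2 * sin θ) (sin θ * (1 - 2 * θ * (π - θ) / π ^ 2)) θ :=
    (((hp θ).const_sub _).mul (hasDerivAt_cos θ)).add ((hp' θ).mul (hasDerivAt_sin θ))
      |>.congr_deriv (by ring)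
  rw [integral_eq_sub_of_hasDerivAt (fun θ _ => hG θ)
    (Continuous.intervalIntegrable (by fun_prop) _ _)]
  simp only [cos_pi_div_two, sin_pi_div_two, cos_zero, sin_zero]
  field_simp
  ring

lemma side_integrand_two_mul_sin {θ : ℝ} (hθ : θ ∈ Ioo 0 (π / 2)) :
    2 * cos θ * (2 * sin θ * (3 / (π * √(4 - (2 * sin θ) ^ 2))) *
      (1 - 2 * arcsin (2 * sin θ / 2) * (π - arcsin (2 * sin θ / 2)) / π ^ 2)) =
    6 / π * (sin θ * (1 - 2 * θ * (π - θ) / π ^ 2)) := by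
  have hcos : 0 < cos θ := cos_pos_of_mem_Ioo ⟨by linarith [hθ.1, pi_pos], hθ.2⟩
  have hsqrt : √(4 - (2 * sin θ) ^ 2) = 2 * cos θ := by
    rw [← sqrt_sq (by positivity : 0 ≤ 2 * cos θ)]
    congr 1
    nlinarith [sin_sq_add_cos_sq θ]
  have harcsin : arcsin (2 * sin θ / 2) = θ := by
    rw [mul_div_cancel_left₀ _ two_ne_zero]
    exact arcsin_sin (by linarith [hθ.1, pi_pos]) hθ.2.le
  rw [hsqrt, harcsin]
  field_simp
  ring

theorem side_mean :
    ∫ s in (0:ℝ)..2, s * (3 / (π * Real.sqrt (4 - s ^ 2))) *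
      (1 - 2 * Real.arcsin (s / 2) * (π - Real.arcsin (s / 2)) / π ^ 2) =
    6 / π - 24 / π ^ 3 := by
  rw [integral_zero_two_eq_of_two_mul_sin fun θ hθ => (smul_eq_mul _ _).trans
      (side_integrand_two_mul_sin hθ),
    intervalIntegral.integral_const_mul, integral_sin_mul_quadratic]
  field_simp
  ring
end

section
/- ∫₀² s² · (3/(π√(4−s²))) · [1 − 2·arcsin(s/2)·(π − arcsin(s/2))/π²] ds = 2 − 3/π². (That is, the second moment of an arbitrary side of a uniform cyclic quadrilateral is 2 − 3/π².) -/
/-!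
The substitution `s = 2 sin θ` turns the integral into `(12/π) ∫₀^{π/2} sin²θ · q θ dθ` with
`q θ = 1 - 2θ(π - θ)/π²`. Since `q` is quadratic, writing `sin²θ = (1 - cos 2θ)/2` and
integrating by parts twice gives the explicit primitive `anglePrimitive`, so
`s ↦ (12/π) · anglePrimitive (arcsin (s/2))` is a primitive of the integrand on `(-2, 2)`.
The integrand is nonnegative (`q θ = (1 - θ/π)² + (θ/π)²`), so despite the singularity at
`s = 2` it is integrable and the fundamental theorem of calculus applies.
-/

open Real intervalIntegral Set

noncomputable def anglePrimitive (θ : ℝ) : ℝ :=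
  (θ - θ ^ 2 / π + 2 * θ ^ 3 / (3 * π ^ 2)) / 2
    - ((1 - 2 * θ * (π - θ) / π ^ 2) * sin (2 * θ) / 4
      + (4 * θ / π ^ 2 - 2 / π) * cos (2 * θ) / 8 - sin (2 * θ) / (4 * π ^ 2))

theorem hasDerivAt_anglePrimitive (θ : ℝ) :
    HasDerivAt anglePrimitive (sin θ ^ 2 * (1 - 2 * θ * (π - θ) / π ^ 2)) θ := by
  have hx := hasDerivAt_id' θ
  have hsin := (hx.const_mul 2).sin
  have hcos := (hx.const_mul 2).cos
  have hq := ((hx.const_mul 2).mul ((hasDerivAt_const θ π).sub hx)).div_const (π ^ 2)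
  have H := ((((hx.sub ((hx.pow 2).div_const π)).add
      (((hx.pow 3).const_mul 2).div_const (3 * π ^ 2))).div_const 2).sub
    (((((hasDerivAt_const θ 1).sub hq).mul hsin).div_const 4).add
      (((((hx.const_mul 4).div_const (π ^ 2)).sub (hasDerivAt_const θ (2 / π))).mul hcos).div_const 8)
      |>.sub (hsin.div_const (4 * π ^ 2))))
  refine H.congr_deriv ?_
  simp only [Pi.sub_apply, Pi.mul_apply]
  rw [cos_two_mul, sin_two_mul, cos_sq']
  field_simp
  ring

theorem anglePrimitive_zero : anglePrimitive 0 = 1 / (4 * π) := by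
  simp only [anglePrimitive, mul_zero, sin_zero, cos_zero]
  field_simp
  ring

theorem anglePrimitive_pi_div_two : anglePrimitive (π / 2) = π / 6 := by
  simp only [anglePrimitive, mul_div_cancel₀ π two_ne_zero, sin_pi, cos_pi]
  field_simp
  ring

theorem hasDerivAt_arcsin_div_two {s : ℝ} (hs₁ : -2 < s) (hs₂ : s < 2) :
    HasDerivAt (fun s => arcsin (s / 2)) (1 / √(4 - s ^ 2)) s := by
  refine ((hasDerivAt_arcsin (by linarith) (by linarith)).comp s
    ((hasDerivAt_id' s).div_const 2)).congr_deriv ?_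
  rw [show 1 - (s / 2) ^ 2 = (4 - s ^ 2) / 2 ^ 2 by ring,
    sqrt_div' _ (by norm_num : (0:ℝ) ≤ 2 ^ 2), sqrt_sq zero_le_two]
  field_simp

theorem hasDerivAt_anglePrimitive_arcsin_div_two {s : ℝ} (hs₁ : -2 < s) (hs₂ : s < 2) :
    HasDerivAt (fun s => 12 / π * anglePrimitive (arcsin (s / 2)))
      (s ^ 2 * (3 / (π * √(4 - s ^ 2))) *
        (1 - 2 * arcsin (s / 2) * (π - arcsin (s / 2)) / π ^ 2)) s := by
  refine ((hasDerivAt_anglePrimitive _).comp s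
    (hasDerivAt_arcsin_div_two hs₁ hs₂)).const_mul _ |>.congr_deriv ?_
  rw [sin_arcsin (by linarith) (by linarith)]
  field_simp
  ring

theorem side_density_moment_nonneg (s : ℝ) :
    0 ≤ s ^ 2 * (3 / (π * √(4 - s ^ 2))) *
      (1 - 2 * arcsin (s / 2) * (π - arcsin (s / 2)) / π ^ 2) := by
  have hweight : 2 * arcsin (s / 2) * (π - arcsin (s / 2)) / π ^ 2 ≤ 1 := by
    rw [div_le_one (by positivity)]
    nlinarith [sq_nonneg (2 * arcsin (s / 2) - π)]
  exact mul_nonneg (by positivity) (sub_nonneg.mpr hweight)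

theorem side_second_moment :
    ∫ s in (0:ℝ)..2, s ^ 2 * (3 / (π * Real.sqrt (4 - s ^ 2))) *
      (1 - 2 * Real.arcsin (s / 2) * (π - Real.arcsin (s / 2)) / π ^ 2) =
    2 - 3 / π ^ 2 := by
  have hcont : ContinuousOn (fun s => 12 / π * anglePrimitive (arcsin (s / 2))) (Icc 0 2) := by
    unfold anglePrimitive
    fun_prop
  have hderiv := fun s (hs : s ∈ Ioo (0:ℝ) 2) =>
    hasDerivAt_anglePrimitive_arcsin_div_two (by linarith [hs.1]) hs.2
  have hint := (intervalIntegrable_iff_integrableOn_Ioc_of_le zero_le_two).mpr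
    (integrableOn_deriv_of_nonneg hcont hderiv fun s _ => side_density_moment_nonneg s)
  rw [integral_eq_sub_of_hasDerivAt_of_le zero_le_two hcont hderiv hint, div_self two_ne_zero, zero_div, arcsin_one, arcsin_zero, anglePrimitive_pi_div_two,
    anglePrimitive_zero]
  field_simp
  ring
end

section
/- ∫₀² z · (12/(π√(4−z²))) · arcsin(z/2)·(π − arcsin(z/2))/π² dz = 48/π³. (That is, the expected length of a diagonal of a uniform cyclic quadrilateral is 48/π³.) -/
/-!
Substituting `z = 2 sin θ` cancels the singular factor `1 / √(4 - z²)` against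
`dz = 2 cos θ dθ` and turns `arcsin (z / 2)` into `θ`, so the integral becomes
`24 / π³ * ∫ θ in 0..π/2, θ (π - θ) sin θ`, and the last integral equals `2`.
The monotone change of variables holds for Bochner integrals without any integrability
assumption, so the singularity at `z = 2` never has to be estimated.
-/

open Real intervalIntegral

theorem integral_eq_integral_comp_mul_sin_mul_cos {r : ℝ} (hr : 0 ≤ r) (g : ℝ → ℝ) :
    ∫ z in 0..r, g z = ∫ θ in 0..π / 2, g (r * sin θ) * (r * cos θ) := by
  have hπ : 0 ≤ π / 2 := by positivity
  have key := integral_comp_mul_deriv_of_deriv_nonneg (g := g) (a := 0) (b := π / 2)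
    (f := fun θ => r * sin θ) (f' := fun θ => r * cos θ) (by fun_prop)
    (fun θ _ => (hasDerivAt_sin θ).const_mul r)
    (fun θ hθ => by
      rw [min_eq_left hπ, max_eq_right hπ] at hθ
      exact mul_nonneg hr (cos_nonneg_of_mem_Icc ⟨by linarith [hθ.1], hθ.2.le⟩))
  simpa using key.symm

theorem sqrt_sq_sub_sq_mul_sin {r θ : ℝ} (hr : 0 ≤ r) (hθ : 0 ≤ cos θ) :
    √(r ^ 2 - (r * sin θ) ^ 2) = r * cos θ := by
  rw [show r ^ 2 - (r * sin θ) ^ 2 = (r * cos θ) ^ 2 by nlinarith [sin_sq_add_cos_sq θ]]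
  exact sqrt_sq (mul_nonneg hr hθ)

theorem integral_mul_pi_sub_mul_sin : ∫ θ in 0..π / 2, θ * (π - θ) * sin θ = 2 := by
  have hF : ∀ θ, HasDerivAt (fun θ => (π - 2 * θ) * sin θ - (θ * (π - θ) + 2) * cos θ)
      (θ * (π - θ) * sin θ) θ := by
    intro θ
    have := (((hasDerivAt_id θ).const_mul 2).const_sub π |>.mul (hasDerivAt_sin θ)).sub
      ((((hasDerivAt_id θ).mul ((hasDerivAt_id θ).const_sub π)).add_const 2).mul
        (hasDerivAt_cos θ))
    refine this.congr_deriv ?_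
    simp only [id, Pi.mul_apply]
    ring
  rw [integral_eq_sub_of_hasDerivAt (fun θ _ => hF θ)
    (Continuous.intervalIntegrable (by fun_prop) _ _)]
  norm_num
  ring

theorem diagonal_integrand_comp_two_mul_sin {θ : ℝ} (hθ : θ ∈ Set.Ioo (-(π / 2)) (π / 2)) :
    2 * sin θ * (12 / (π * √(4 - (2 * sin θ) ^ 2))) *
        (arcsin (2 * sin θ / 2) * (π - arcsin (2 * sin θ / 2)) / π ^ 2) * (2 * cos θ) =
      24 / π ^ 3 * (θ * (π - θ) * sin θ) := by
  have hcos : 0 < cos θ := cos_pos_of_mem_Ioo hθ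
  rw [show (4 : ℝ) = 2 ^ 2 by norm_num, sqrt_sq_sub_sq_mul_sin zero_le_two hcos.le,
    mul_div_cancel_left₀ _ two_ne_zero, arcsin_sin hθ.1.le hθ.2.le]
  field_simp
  ring

theorem diagonal_mean :
    ∫ z in (0:ℝ)..2, z * (12 / (π * Real.sqrt (4 - z ^ 2))) *
      (Real.arcsin (z / 2) * (π - Real.arcsin (z / 2)) / π ^ 2) =
    48 / π ^ 3 := by
  rw [integral_eq_integral_comp_mul_sin_mul_cos zero_le_two,
    integral_congr_Ioo_of_le (by positivity) fun θ hθ =>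
      diagonal_integrand_comp_two_mul_sin ⟨by linarith [hθ.1, pi_pos], hθ.2⟩,
    integral_const_mul, integral_mul_pi_sub_mul_sin]
  ring
end

section
/- ∫₀² z² · (12/(π√(4−z²))) · arcsin(z/2)·(π − arcsin(z/2))/π² dz = 2 + 6/π². (That is, the second moment of a diagonal of a uniform cyclic quadrilateral is 2 + 6/π².) -/
/-!
Substituting `z = 2 sin θ`, `θ ∈ [0, π/2]`, cancels the singular factor `√(4 - z²) = 2 cos θ`
against `dz = 2 cos θ dθ` and turns `arcsin (z / 2)` into `θ`, so the moment becomes the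
elementary integral `48 / π³ · ∫₀^{π/2} θ (π - θ) sin² θ dθ = 48 / π³ · (π³ / 24 + π / 8)`.
-/

open Real intervalIntegral

theorem integral_eq_integral_comp_mul_sin {r : ℝ} (hr : 0 ≤ r) (g : ℝ → ℝ) :
    ∫ z in (0:ℝ)..r, g z = ∫ θ in (0:ℝ)..π / 2, g (r * sin θ) * (r * cos θ) := by
  have hderiv (θ : ℝ) : HasDerivAt (fun θ => r * sin θ) (r * cos θ) θ :=
    (hasDerivAt_sin θ).const_mul r
  have key := integral_comp_mul_deriv_of_deriv_nonneg (g := g) (a := 0) (b := π / 2)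
    (fun θ _ => (hderiv θ).continuousAt.continuousWithinAt) (fun θ _ => hderiv θ) fun θ hθ => by
      rw [min_eq_left (by positivity), max_eq_right (by positivity)] at hθ
      exact mul_nonneg hr (cos_nonneg_of_mem_Icc ⟨by linarith [hθ.1, pi_pos], hθ.2.le⟩)
  simpa using key.symm

theorem hasDerivAt_primitive_sin_sq_mul_self_mul_pi_sub (θ : ℝ) :
    HasDerivAt (fun θ => π * θ ^ 2 / 4 - θ ^ 3 / 6 - θ * (π - θ) * sin θ * cos θ / 2
        - (π - 2 * θ) * (cos θ ^ 2 - sin θ ^ 2) / 8 - sin θ * cos θ / 4)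
      (sin θ ^ 2 * (θ * (π - θ))) θ := by
  have hs := hasDerivAt_sin θ
  have hc := hasDerivAt_cos θ
  have hid := hasDerivAt_id' θ
  have hπ := hasDerivAt_const θ π
  refine ((((((hid.pow 2).const_mul π).div_const 4).sub ((hid.pow 3).div_const 6)).sub
    ((((hid.mul (hπ.sub hid)).mul hs).mul hc).div_const 2)).sub
    (((hπ.sub (hid.const_mul 2)).mul ((hc.pow 2).sub (hs.pow 2))).div_const 8)).sub
    ((hs.mul hc).div_const 4) |>.congr_deriv ?_
  simp only [Pi.sub_apply, Pi.mul_apply, Pi.pow_apply]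
  push_cast
  linear_combination (-θ * (π - θ) / 2) * (sin_sq_add_cos_sq θ)

theorem integral_sin_sq_mul_self_mul_pi_sub :
    ∫ θ in (0:ℝ)..π / 2, sin θ ^ 2 * (θ * (π - θ)) = π ^ 3 / 24 + π / 8 := by
  rw [integral_eq_sub_of_hasDerivAt (fun θ _ => hasDerivAt_primitive_sin_sq_mul_self_mul_pi_sub θ)
    ((by fun_prop : Continuous fun θ => sin θ ^ 2 * (θ * (π - θ))).intervalIntegrable _ _)]
  simp only [sin_pi_div_two, cos_pi_div_two, sin_zero, cos_zero]
  ring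

theorem diagonal_second_moment :
    ∫ z in (0:ℝ)..2, z ^ 2 * (12 / (π * Real.sqrt (4 - z ^ 2))) *
      (Real.arcsin (z / 2) * (π - Real.arcsin (z / 2)) / π ^ 2) =
    2 + 6 / π ^ 2 := by
  calc _ = ∫ θ in (0:ℝ)..π / 2, (2 * sin θ) ^ 2 * (12 / (π * √(4 - (2 * sin θ) ^ 2))) *
          (arcsin (2 * sin θ / 2) * (π - arcsin (2 * sin θ / 2)) / π ^ 2) * (2 * cos θ) :=
        integral_eq_integral_comp_mul_sin zero_le_two _
    _ = ∫ θ in (0:ℝ)..π / 2, 48 / π ^ 3 * (sin θ ^ 2 * (θ * (π - θ))) := by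
        refine integral_congr_Ioo_of_le (by positivity) fun θ hθ => ?_
        have hcos : 0 < cos θ := cos_pos_of_mem_Ioo ⟨by linarith [hθ.1, pi_pos], hθ.2⟩
        have hsqrt : √(4 - (2 * sin θ) ^ 2) = 2 * cos θ := by
          rw [← sqrt_sq (by positivity : 0 ≤ 2 * cos θ)]
          congr 1
          linear_combination -4 * sin_sq_add_cos_sq θ
        have harcsin : arcsin (2 * sin θ / 2) = θ := by
          rw [mul_div_cancel_left₀ _ two_ne_zero, arcsin_sin (by linarith [hθ.1, pi_pos]) hθ.2.le]
        rw [hsqrt, harcsin]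
        field_simp
        ring
    _ = 2 + 6 / π ^ 2 := by
        rw [integral_const_mul, integral_sin_sq_mul_self_mul_pi_sub]
        field_simp
        ring
end

section
/- (3/(2π⁴)) · ∫₀^{2π} ∫_{θ₁}^{2π} ∫_{θ₂}^{2π} ∫_{θ₃}^{2π} [2 sin((θ₄ − θ₁)/2)]·[2 sin((θ₂ − θ₁)/2)] dθ₄ dθ₃ dθ₂ dθ₁ = −24/π² + 384/π⁴. (That is, the expected product E(s₁s₂) of the adjacent sides s₁ and s₂ of a uniform cyclic quadrilateral equals −24/π² + 384/π⁴, using that s₁ = 2 sin((θ₁ − θ₀)/2) = 2 sin(π − (θ₄ − θ₁)/2) = 2 sin((θ₄ − θ₁)/2).) -/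
/-!
The integrand depends on θ₁ only through the gaps θ₄ - θ₁ and θ₂ - θ₁. Translating the three
inner variables by θ₁ and substituting L = 2π - θ₁ turns the four-fold integral into the integral
over L ∈ [0, 2π] of `chordSimplexIntegral L`, the integral of chord(w)·chord(u) over the simplex
0 ≤ u ≤ v ≤ w ≤ L. From there every integral is elementary and is evaluated by the fundamental
theorem of calculus.
-/

open Real intervalIntegral

lemma integral_iterated_eq_integral_gaps (f g : ℝ → ℝ) (T : ℝ) :
    ∫ θ₁ in 0..T, ∫ θ₂ in θ₁..T, ∫ θ₃ in θ₂..T, ∫ θ₄ in θ₃..T, f (θ₄ - θ₁) * g (θ₂ - θ₁) =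
      ∫ L in 0..T, ∫ u in 0..L, (∫ v in u..L, ∫ w in v..L, f w) * g u := by
  have hshift : ∀ a, ∫ θ₂ in a..T, ∫ θ₃ in θ₂..T, ∫ θ₄ in θ₃..T, f (θ₄ - a) * g (θ₂ - a) =
      ∫ u in 0..T - a, (∫ v in u..T - a, ∫ w in v..T - a, f w) * g u := by
    intro a
    simp only [integral_mul_const, integral_comp_sub_right (fun w => f w),
      integral_comp_sub_right (fun v => ∫ w in v..T - a, f w)]
    rw [integral_comp_sub_right (fun u => (∫ v in u..T - a, ∫ w in v..T - a, f w) * g u),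
      sub_self]
  simp only [hshift]
  rw [integral_comp_sub_left (fun L => ∫ u in 0..L, (∫ v in u..L, ∫ w in v..L, f w) * g u),
    sub_self, sub_zero]

noncomputable def chord (x : ℝ) : ℝ := 2 * sin (x / 2)

noncomputable def chordSimplexIntegral (L : ℝ) : ℝ :=
  ∫ u in 0..L, (∫ v in u..L, ∫ w in v..L, chord w) * chord u

lemma integral_chord (a b : ℝ) : ∫ x in a..b, chord x = 4 * cos (a / 2) - 4 * cos (b / 2) := by
  simp only [chord, integral_const_mul, integral_comp_div (fun x => sin x) two_ne_zero,
    integral_sin, smul_eq_mul]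
  ring

lemma integral_integral_chord (u L : ℝ) :
    ∫ v in u..L, ∫ w in v..L, chord w =
      8 * sin (L / 2) - 8 * sin (u / 2) - 4 * (L - u) * cos (L / 2) := by
  have hcos : IntervalIntegrable (fun v => 4 * cos (v / 2)) MeasureTheory.volume u L :=
    (by fun_prop : Continuous _).intervalIntegrable _ _
  simp only [integral_chord]
  rw [integral_sub hcos intervalIntegrable_const, integral_const_mul,
    integral_comp_div (fun x => cos x) two_ne_zero, integral_cos, integral_const, smul_eq_mul]
  ring

lemma chordSimplexIntegral_eq (L : ℝ) :
    chordSimplexIntegral L = 32 * sin (L / 2) - 8 * L + 8 * sin L - 16 * L * cos (L / 2) := by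
  have hderiv : ∀ u ∈ Set.uIcc 0 L, HasDerivAt
      (fun u => -32 * sin (L / 2) * cos (u / 2) - 8 * u + 16 * (sin (u / 2) * cos (u / 2))
        + 16 * cos (L / 2) * (L - u) * cos (u / 2) + 32 * cos (L / 2) * sin (u / 2))
      ((8 * sin (L / 2) - 8 * sin (u / 2) - 4 * (L - u) * cos (L / 2)) * chord u) u := by
    intro u _
    have h : HasDerivAt (fun u : ℝ => u / 2) (1 / 2) u := (hasDerivAt_id u).div_const 2
    refine (((((h.cos.const_mul _).fun_sub ((hasDerivAt_id' u).const_mul 8)).fun_add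
      ((h.sin.fun_mul h.cos).const_mul 16)).fun_add
      ((((hasDerivAt_const u L).fun_sub (hasDerivAt_id' u)).const_mul _).fun_mul h.cos)).fun_add
      (h.sin.const_mul _)).congr_deriv ?_
    simp only [chord]
    linear_combination (8 : ℝ) * sin_sq_add_cos_sq (u / 2)
  have hsin : sin L = 2 * sin (L / 2) * cos (L / 2) := by
    rw [← sin_two_mul, mul_div_cancel₀ L two_ne_zero]
  simp only [chordSimplexIntegral, integral_integral_chord]
  rw [integral_eq_sub_of_hasDerivAt hderiv
    ((by simp only [chord]; fun_prop : Continuous _).intervalIntegrable _ _)]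
  simp only [zero_div, sin_zero, cos_zero, sub_zero]
  rw [hsin]
  ring

lemma integral_chordSimplexIntegral :
    ∫ L in 0..2 * π, chordSimplexIntegral L = 256 - 16 * π ^ 2 := by
  have hderiv : ∀ L ∈ Set.uIcc 0 (2 * π), HasDerivAt
      (fun L => -128 * cos (L / 2) - 4 * L ^ 2 - 8 * cos L - 32 * (L * sin (L / 2)))
      (32 * sin (L / 2) - 8 * L + 8 * sin L - 16 * L * cos (L / 2)) L := by
    intro L _
    have h : HasDerivAt (fun L : ℝ => L / 2) (1 / 2) L := (hasDerivAt_id L).div_const 2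
    refine ((((h.cos.const_mul _).fun_sub ((hasDerivAt_pow 2 L).const_mul 4)).fun_sub
      ((hasDerivAt_cos L).const_mul 8)).fun_sub
      (((hasDerivAt_id' L).fun_mul h.sin).const_mul 32)).congr_deriv ?_
    push_cast
    ring
  simp only [chordSimplexIntegral_eq]
  rw [integral_eq_sub_of_hasDerivAt hderiv ((by fun_prop : Continuous _).intervalIntegrable _ _)]
  simp only [show 2 * π / 2 = π by ring, zero_div, cos_pi, cos_two_pi, sin_pi, cos_zero]
  ring

theorem expected_product_s1_s2 :
    (3 / (2 * π ^ 4)) *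
      ∫ θ₁ in (0:ℝ)..(2 * π), ∫ θ₂ in θ₁..(2 * π), ∫ θ₃ in θ₂..(2 * π), ∫ θ₄ in θ₃..(2 * π),
        (2 * Real.sin ((θ₄ - θ₁) / 2)) * (2 * Real.sin ((θ₂ - θ₁) / 2)) =
    -24 / π ^ 2 + 384 / π ^ 4 := by
  have hintegral :=
    (integral_iterated_eq_integral_gaps chord chord (2 * π)).trans integral_chordSimplexIntegral
  unfold chord at hintegral
  rw [hintegral]
  field_simp
  ring
end

section
/- Let g : ℝ × ℝ → ℝ be a bounded continuous function. Then 6 · ∫ g(ξ₁ + ξ₂, ξ₂ + ξ₃) dξ₁dξ₂dξ₃ over the simplex {ξ₁ > 0, ξ₂ > 0, ξ₃ > 0, ξ₁ + ξ₂ + ξ₃ < 1} equals ∫₀¹ ∫₀¹ g(u, v) · 6·min{u, 1−u, v, 1−v} du dv. (That is, if (ξ₁,ξ₂,ξ₃) is uniform on the 3-dimensional simplex, then the pair (η₁, η₂) = (ξ₁ + ξ₂, ξ₂ + ξ₃) has joint density 6·min{η₁, 1−η₁, η₂, 1−η₂} on the unit square — the bivariate tent distribution.) -/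
/-!
The shear `((u, v), w) ↦ (u - w, w, v - w)` has determinant one and turns `(ξ₁ + ξ₂, ξ₂ + ξ₃)`
into the first coordinate `(u, v)`. It pulls the simplex back to the region
`max 0 (u + v - 1) < w < min u v`, so by Fubini the law of `(u, v)` has density `6` times the
length of this fibre. That length is `min u v - max 0 (u + v - 1) = min {u, 1 - u, v, 1 - v}`
on the unit square and nonpositive (an empty fibre) off it.
-/

open MeasureTheory Set

theorem measurePreserving_sub_prod_of_measurable {G α : Type*} [MeasurableSpace G]
    [MeasurableSpace α] [AddGroup G] [MeasurableSub₂ G] (μ : Measure G) (ν : Measure α)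
    [SFinite μ] [SFinite ν] [μ.IsAddRightInvariant] {φ : α → G} (hφ : Measurable φ) :
    MeasurePreserving (fun p : G × α => (p.1 - φ p.2, p.2)) (μ.prod ν) (μ.prod ν) :=
  Measure.measurePreserving_swap.comp <|
    ((MeasurePreserving.id ν).skew_product (g := fun a x => x - φ a)
      (measurable_snd.sub (hφ.comp measurable_fst))
      (ae_of_all _ fun a => map_sub_right_eq_self μ (φ a))).comp Measure.measurePreserving_swap

theorem setIntegral_comp_fst_eq_integral_measureReal_smul {α β E : Type*} [MeasurableSpace α]
    [MeasurableSpace β] [NormedAddCommGroup E] [NormedSpace ℝ E] [CompleteSpace E]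
    {μ : Measure α} {ν : Measure β} [SFinite μ] [SFinite ν] {s : Set (α × β)}
    (hs : MeasurableSet s) {f : α → E} (hf : IntegrableOn (fun p => f p.1) s (μ.prod ν)) :
    ∫ p in s, f p.1 ∂μ.prod ν = ∫ x, ν.real (Prod.mk x ⁻¹' s) • f x ∂μ := by
  rw [← integral_indicator hs, integral_prod _ ((integrable_indicator_iff hs).2 hf)]
  exact integral_congr_ae <| ae_of_all _ fun x =>
    integral_indicator_const (f x) (measurable_prodMk_left hs)

theorem setIntegral_Ioc_prod_Ioc {E : Type*} [NormedAddCommGroup E] [NormedSpace ℝ E]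
    {F : ℝ × ℝ → E} {a b c d : ℝ} (hab : a ≤ b) (hcd : c ≤ d)
    (hF : IntegrableOn F (Ioc a b ×ˢ Ioc c d)) :
    ∫ x in Ioc a b ×ˢ Ioc c d, F x = ∫ u in a..b, ∫ v in c..d, F (u, v) := by
  rw [Measure.volume_eq_prod, setIntegral_prod _ hF, intervalIntegral.integral_of_le hab]
  simp_rw [intervalIntegral.integral_of_le hcd]

def tentShear : ((ℝ × ℝ) × ℝ) ≃ᵐ ℝ × ℝ × ℝ where
  toFun p := (p.1.1 - p.2, p.2, p.1.2 - p.2)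
  invFun ξ := ((ξ.1 + ξ.2.1, ξ.2.2 + ξ.2.1), ξ.2.1)
  left_inv p := by simp
  right_inv ξ := by simp
  measurable_toFun := by simp only [Equiv.coe_fn_mk]; fun_prop
  measurable_invFun := by simp only [Equiv.coe_fn_symm_mk]; fun_prop

@[simp]
lemma tentShear_apply (p : (ℝ × ℝ) × ℝ) : tentShear p = (p.1.1 - p.2, p.2, p.1.2 - p.2) := rfl

lemma measurePreserving_tentShear : MeasurePreserving tentShear := by
  have hshear := measurePreserving_sub_prod_of_measurable (volume : Measure ℝ)
    (volume : Measure (ℝ × ℝ)) (φ := Prod.fst) measurable_fst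
  exact hshear.comp (((MeasurePreserving.id volume).prod
    (measurePreserving_prod_sub_swap volume volume)).comp volume_preserving_prodAssoc)

def openSimplex : Set (ℝ × ℝ × ℝ) :=
  {ξ | 0 < ξ.1 ∧ 0 < ξ.2.1 ∧ 0 < ξ.2.2 ∧ ξ.1 + ξ.2.1 + ξ.2.2 < 1}

lemma measurableSet_openSimplex : MeasurableSet openSimplex := by
  unfold openSimplex; measurability

lemma tentShear_preimage_openSimplex_subset :
    tentShear ⁻¹' openSimplex ⊆ (Icc 0 1 ×ˢ Icc 0 1) ×ˢ Icc 0 1 := by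
  rintro ⟨⟨u, v⟩, w⟩ ⟨h₁, h₂, h₃, h₄⟩
  simp only [tentShear_apply] at *
  refine ⟨⟨⟨?_, ?_⟩, ?_, ?_⟩, ?_, ?_⟩ <;> linarith

lemma fiber_tentShear_preimage_openSimplex (x : ℝ × ℝ) :
    Prod.mk x ⁻¹' (tentShear ⁻¹' openSimplex) = Ioo (max 0 (x.1 + x.2 - 1)) (min x.1 x.2) := by
  ext w
  simp only [openSimplex, mem_preimage, tentShear_apply, mem_ofPred_eq, mem_Ioo, max_lt_iff,
    lt_min_iff]
  constructor
  · rintro ⟨h₁, h₂, h₃, h₄⟩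
    exact ⟨⟨h₂, by linarith⟩, by linarith, by linarith⟩
  · rintro ⟨⟨h₂, h₄⟩, h₁, h₃⟩
    exact ⟨by linarith, h₂, by linarith, by linarith⟩

def tent (x : ℝ × ℝ) : ℝ := min (min x.1 (1 - x.1)) (min x.2 (1 - x.2))

lemma continuous_tent : Continuous tent := by
  unfold tent; fun_prop

lemma min_sub_max_eq_tent (x : ℝ × ℝ) : min x.1 x.2 - max 0 (x.1 + x.2 - 1) = tent x := by
  simp only [tent, min_def, max_def]
  split_ifs <;> linarith

lemma tent_nonneg {x : ℝ × ℝ} (hx : x ∈ Ioc 0 1 ×ˢ Ioc 0 1) : 0 ≤ tent x := by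
  obtain ⟨⟨h₁, h₂⟩, h₃, h₄⟩ := hx
  simp only [tent, le_min_iff]
  refine ⟨⟨?_, ?_⟩, ?_, ?_⟩ <;> linarith

lemma tent_nonpos {x : ℝ × ℝ} (hx : x ∉ Ioc 0 1 ×ˢ Ioc 0 1) : tent x ≤ 0 := by
  simp only [mem_prod, mem_Ioc, not_and_or, not_lt, not_le] at hx
  simp only [tent, min_le_iff, sub_nonpos]
  rcases hx with (h | h) | (h | h) <;> grind

lemma volume_real_Ioo_max_min (x : ℝ × ℝ) :
    volume.real (Ioo (max 0 (x.1 + x.2 - 1)) (min x.1 x.2)) =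
      (Ioc 0 1 ×ˢ Ioc 0 1).indicator tent x := by
  rw [Real.volume_real_Ioo, min_sub_max_eq_tent]
  by_cases hx : x ∈ Ioc 0 1 ×ˢ Ioc 0 1
  · rw [indicator_of_mem hx, max_eq_left (tent_nonneg hx)]
  · rw [indicator_of_notMem hx, max_eq_right (tent_nonpos hx)]

theorem bivariate_tent_from_simplex_general (g : ℝ × ℝ → ℝ) (hg : Continuous g) :
    6 * ∫ ξ in {ξ : ℝ × ℝ × ℝ |
        0 < ξ.1 ∧ 0 < ξ.2.1 ∧ 0 < ξ.2.2 ∧ ξ.1 + ξ.2.1 + ξ.2.2 < 1},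
      g (ξ.1 + ξ.2.1, ξ.2.1 + ξ.2.2) =
    ∫ u in (0:ℝ)..1, ∫ v in (0:ℝ)..1,
      g (u, v) * (6 * min (min u (1 - u)) (min v (1 - v))) := by
  have hshear_meas := measurableSet_openSimplex.preimage tentShear.measurable
  have hshear_int : IntegrableOn (fun p : (ℝ × ℝ) × ℝ => g p.1) (tentShear ⁻¹' openSimplex) :=
    ((hg.comp continuous_fst).continuousOn.integrableOn_compact
      ((isCompact_Icc.prod isCompact_Icc).prod isCompact_Icc)).mono_set
      tentShear_preimage_openSimplex_subset
  have hsquare_int : IntegrableOn (fun x => g x * (6 * tent x)) (Ioc 0 1 ×ˢ Ioc 0 1) :=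
    ((hg.mul (continuous_const.mul continuous_tent)).continuousOn.integrableOn_compact
      (isCompact_Icc.prod isCompact_Icc)).mono_set
      (prod_mono Ioc_subset_Icc_self Ioc_subset_Icc_self)
  calc 6 * ∫ ξ in openSimplex, g (ξ.1 + ξ.2.1, ξ.2.1 + ξ.2.2)
      = 6 * ∫ p in tentShear ⁻¹' openSimplex, g p.1 := by
        rw [← measurePreserving_tentShear.setIntegral_preimage_emb
          tentShear.measurableEmbedding]
        simp
    _ = 6 * ∫ x, (Ioc 0 1 ×ˢ Ioc 0 1).indicator tent x * g x := by
        rw [Measure.volume_eq_prod,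
          setIntegral_comp_fst_eq_integral_measureReal_smul hshear_meas hshear_int]
        simp_rw [fiber_tentShear_preimage_openSimplex, volume_real_Ioo_max_min, smul_eq_mul]
    _ = ∫ x in Ioc 0 1 ×ˢ Ioc 0 1, g x * (6 * tent x) := by
        rw [← integral_const_mul, ← integral_indicator (measurableSet_Ioc.prod measurableSet_Ioc)]
        congr with x
        simp only [indicator_apply]
        split_ifs <;> ring
    _ = _ := setIntegral_Ioc_prod_Ioc zero_le_one zero_le_one hsquare_int

theorem bivariate_tent_from_simplex (g : ℝ × ℝ → ℝ) (hg : Continuous g)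
    (hb : ∃ C, ∀ p, |g p| ≤ C) :
    6 * ∫ ξ in {ξ : ℝ × ℝ × ℝ |
        0 < ξ.1 ∧ 0 < ξ.2.1 ∧ 0 < ξ.2.2 ∧ ξ.1 + ξ.2.1 + ξ.2.2 < 1},
      g (ξ.1 + ξ.2.1, ξ.2.1 + ξ.2.2) =
    ∫ u in (0:ℝ)..1, ∫ v in (0:ℝ)..1,
      g (u, v) * (6 * min (min u (1 - u)) (min v (1 - v))) :=
  bivariate_tent_from_simplex_general g hg
end

section
/- ∫₀^π ∫₀^π α · β · (6/π³)·min{α, π−α, β, π−β} dα dβ = π²/4. (Since each of α and β has marginal density 6x(π−x)/π³ on [0,π] with mean π/2, this says E(αβ) = E(α)E(β), i.e., two arbitrary adjacent angles of a uniform cyclic quadrilateral are uncorrelated: ρ(α,β) = 0.) -/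
/-!
The density is invariant under each of the reflections `α ↦ π - α` and `β ↦ π - β`, and for a
function `f` with `f (L - x) = f x` the substitution `x ↦ L - x` gives `∫₀ᴸ x f = (L / 2) ∫₀ᴸ f`.
Applied in each variable this gives `E(αβ) = (π / 2)²` times the total mass, which is `1` because
`∫₀^π min m (min β (π - β)) dβ = m (π - m) = α (π - α)` for `m = min α (π - α)`, and
`∫₀^π α (π - α) dα = π³ / 6`.
-/

open Real intervalIntegral

theorem integral_id_mul_of_symmetric {f : ℝ → ℝ} {L : ℝ} (hf : ∀ x, f (L - x) = f x)
    (hfi : IntervalIntegrable f MeasureTheory.volume 0 L) :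
    ∫ x in 0..L, x * f x = L / 2 * ∫ x in 0..L, f x := by
  have hreflect : ∫ x in 0..L, (L - x) * f x = ∫ x in 0..L, x * f x := by
    simpa [hf] using integral_comp_sub_left (a := 0) (b := L) (fun x => x * f x) L
  have hsum : (∫ x in 0..L, (L - x) * f x) + ∫ x in 0..L, x * f x = L * ∫ x in 0..L, f x := by
    rw [← integral_add (hfi.continuousOn_mul (by fun_prop)) (hfi.continuousOn_mul (by fun_prop)),
      ← integral_const_mul]
    congr 1 with x
    ring
  linarith

theorem integral_min_min_sub {L m : ℝ} (hm : 0 ≤ m) (hmL : m ≤ L - m) :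
    ∫ x in 0..L, min m (min x (L - x)) = m * (L - m) := by
  have hcont : Continuous fun x : ℝ => min m (min x (L - x)) := by fun_prop
  rw [← integral_add_adjacent_intervals (b := L - m) (hcont.intervalIntegrable _ _)
      (hcont.intervalIntegrable _ _),
    ← integral_add_adjacent_intervals (b := m) (hcont.intervalIntegrable _ _)
      (hcont.intervalIntegrable _ _)]
  have hleft : ∫ x in 0..m, min m (min x (L - x)) = ∫ x in 0..m, x := by
    refine integral_congr fun x hx => ?_
    rw [Set.uIcc_of_le hm] at hx
    rw [min_eq_left (by linarith [hx.2] : x ≤ L - x), min_eq_right hx.2]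
  have hmid : ∫ x in m..L - m, min m (min x (L - x)) = ∫ x in m..L - m, m := by
    refine integral_congr fun x hx => ?_
    rw [Set.uIcc_of_le hmL] at hx
    exact min_eq_left (le_min hx.1 (by linarith [hx.2]))
  have hright : ∫ x in L - m..L, min m (min x (L - x)) = ∫ x in L - m..L, (L - x) := by
    refine integral_congr fun x hx => ?_
    rw [Set.uIcc_of_le (by linarith)] at hx
    rw [min_eq_right (by linarith [hx.1] : L - x ≤ x), min_eq_right (by linarith [hx.1])]
  rw [hleft, hmid, hright, integral_comp_sub_left (fun x => x) L, integral_id, integral_id,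
    integral_const, smul_eq_mul]
  ring

theorem integral_min_min_sub_of_mem_Icc {L a : ℝ} (ha : a ∈ Set.Icc 0 L) :
    ∫ x in 0..L, min (min a (L - a)) (min x (L - x)) = a * (L - a) := by
  rcases le_total a (L - a) with h | h
  · rw [min_eq_left h, integral_min_min_sub ha.1 h]
  · rw [min_eq_right h, integral_min_min_sub (by linarith [ha.2]) (by linarith), sub_sub_cancel,
      mul_comm]

theorem integral_id_mul_min_min_sub {L a : ℝ} (ha : a ∈ Set.Icc 0 L) :
    ∫ x in 0..L, x * min (min a (L - a)) (min x (L - x)) = L / 2 * (a * (L - a)) := by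
  have hsymm : ∀ x, min (min a (L - a)) (min (L - x) (L - (L - x))) =
      min (min a (L - a)) (min x (L - x)) := fun x => by rw [sub_sub_cancel, min_comm (L - x)]
  have hcont : Continuous fun x : ℝ => min (min a (L - a)) (min x (L - x)) := by fun_prop
  rw [integral_id_mul_of_symmetric hsymm (hcont.intervalIntegrable _ _),
    integral_min_min_sub_of_mem_Icc ha]

theorem integral_mul_sub (L : ℝ) : ∫ x in 0..L, x * (L - x) = L ^ 3 / 6 := by
  simp only [mul_sub, ← pow_two]
  rw [integral_sub (intervalIntegrable_id.mul_const L) (intervalIntegrable_pow 2),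
    integral_mul_const, integral_id, integral_pow]
  ring

theorem adjacent_angles_uncorrelated :
    ∫ α in (0:ℝ)..π, ∫ β in (0:ℝ)..π,
      α * β * ((6 / π ^ 3) * min (min α (π - α)) (min β (π - β))) =
    π ^ 2 / 4 := by
  have hinner : ∀ α ∈ Set.uIcc 0 π, ∫ β in 0..π,
      α * β * ((6 / π ^ 3) * min (min α (π - α)) (min β (π - β))) =
      α * (3 / π ^ 2 * (α * (π - α))) := by
    intro α hα
    rw [Set.uIcc_of_le pi_pos.le] at hα
    calc _ = α * (6 / π ^ 3) * ∫ β in 0..π, β * min (min α (π - α)) (min β (π - β)) := by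
          rw [← integral_const_mul]; congr 1 with β; ring
      _ = _ := by
          rw [integral_id_mul_min_min_sub hα]
          field_simp; ring
  have hcont : Continuous fun α : ℝ => 3 / π ^ 2 * (α * (π - α)) := by fun_prop
  calc _ = ∫ α in 0..π, α * (3 / π ^ 2 * (α * (π - α))) := integral_congr hinner
    _ = π / 2 * ∫ α in 0..π, 3 / π ^ 2 * (α * (π - α)) :=
        integral_id_mul_of_symmetric (fun α => by ring) (hcont.intervalIntegrable _ _)
    _ = π ^ 2 / 4 := by
        rw [integral_const_mul, integral_mul_sub]
        field_simp; ring
end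

section
/- Let g, k : ℝ → ℝ be bounded continuous functions. Then (2/π²) · ∫∫ g(2 sin α)·k(2 sin β) dα dβ over the triangle {0 < α, 0 < β, α + β < π} equals [∫₀² g(a) · 2/(π√(4−a²)) da] · [∫₀² k(b) · 2/(π√(4−b²)) db]. (That is, for a uniform cyclic triangle the two sides a = 2 sin α and b = 2 sin β are independent, with joint density (4/π²)·(1/√(4−a²))·(1/√(4−b²)) on (0,2)², even though the angles α and β are dependent.) -/
open MeasureTheory Real intervalIntegral Set

/-!
The point reflection `p ↦ (π, π) - p` maps the triangle onto the complementary half of the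
square `(0, π)²` (up to the null antidiagonal) and preserves `g (2 sin α) * k (2 sin β)`, because
`sin (π - x) = sin x`. So the triangle integral is half the square integral, which factors by
Fubini. In one variable, folding `(0, π)` at `π / 2` and substituting `a = 2 sin x`
(`da = √(4 - a²) dx`) gives `∫₀^π g (2 sin x) dx = ∫₀² g a * 2 / √(4 - a²) da`.
-/

lemma setIntegral_Ioo_zero_pi_div_two_comp_two_mul_sin (f : ℝ → ℝ) :
    ∫ x in Ioo 0 (π / 2), f (2 * sin x) = ∫ a in Ioo 0 2, f a / √(4 - a ^ 2) := by
  have hmono : StrictMonoOn (fun x => 2 * sin x) (Icc 0 (π / 2)) := fun x hx y hy hxy =>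
    mul_lt_mul_of_pos_left (strictMonoOn_sin ⟨by linarith [hx.1, pi_pos], hx.2⟩
      ⟨by linarith [hy.1, pi_pos], hy.2⟩ hxy) two_pos
  have himage : (fun x => 2 * sin x) '' Ioo 0 (π / 2) = Ioo 0 2 := by
    rw [(by fun_prop : Continuous fun x => 2 * sin x).continuousOn.image_Ioo_of_strictMonoOn
      (by positivity) hmono]
    simp
  have hderiv : ∀ x ∈ Ioo 0 (π / 2),
      HasDerivWithinAt (fun x => 2 * sin x) (2 * cos x) (Ioo 0 (π / 2)) x := fun x _ =>
    ((hasDerivAt_sin x).const_mul 2).hasDerivWithinAt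
  rw [← himage, integral_image_eq_integral_abs_deriv_smul measurableSet_Ioo hderiv
    (hmono.injOn.mono Ioo_subset_Icc_self)]
  refine setIntegral_congr_fun measurableSet_Ioo fun x hx => ?_
  have hcos : 0 < cos x := cos_pos_of_mem_Ioo ⟨by linarith [hx.1, pi_pos], hx.2⟩
  have hsqrt : √(4 - (2 * sin x) ^ 2) = 2 * cos x := by
    rw [← sqrt_sq (by positivity : 0 ≤ 2 * cos x)]
    congr 1
    nlinarith [sin_sq_add_cos_sq x]
  rw [hsqrt, abs_of_pos (by positivity), smul_eq_mul]
  field_simp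

lemma integral_eq_two_mul_integral_half_of_symm {u : ℝ → ℝ} {c : ℝ} (hc : 0 ≤ c)
    (hu : ∀ x, u (c - x) = u x) (hint : IntervalIntegrable u volume 0 c) :
    ∫ x in 0..c, u x = 2 * ∫ x in 0..c / 2, u x := by
  have hmid : c / 2 ∈ uIcc 0 c := by rw [uIcc_of_le hc]; constructor <;> linarith
  rw [← integral_add_adjacent_intervals (hint.mono_set (uIcc_subset_uIcc left_mem_uIcc hmid))
    (hint.mono_set (uIcc_subset_uIcc hmid right_mem_uIcc))]
  have hupper : ∫ x in c / 2..c, u x = ∫ x in 0..c / 2, u x := by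
    simpa only [hu, sub_zero, sub_half] using
      (integral_comp_sub_left u c (a := 0) (b := c / 2)).symm
  rw [hupper]
  ring

lemma setIntegral_Ioo_zero_pi_comp_two_mul_sin {g : ℝ → ℝ} (hg : Continuous g) :
    ∫ x in Ioo 0 π, g (2 * sin x) = π * ∫ a in 0..2, g a * (2 / (π * √(4 - a ^ 2))) := by
  have hsymm := integral_eq_two_mul_integral_half_of_symm pi_pos.le
    (u := fun x => g (2 * sin x)) (by simp [sin_pi_sub])
    ((by fun_prop : Continuous fun x => g (2 * sin x)).intervalIntegrable _ _)
  rw [integral_of_le pi_pos.le, integral_of_le (by positivity), integral_Ioc_eq_integral_Ioo,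
    integral_Ioc_eq_integral_Ioo, setIntegral_Ioo_zero_pi_div_two_comp_two_mul_sin] at hsymm
  rw [hsymm, integral_of_le two_pos.le, integral_Ioc_eq_integral_Ioo]
  have hdensity : ∀ a : ℝ, g a * (2 / (π * √(4 - a ^ 2))) = 2 / π * (g a / √(4 - a ^ 2)) :=
    fun a => by ring
  simp_rw [hdensity, MeasureTheory.integral_const_mul]
  field_simp

def openTriangle (c : ℝ) : Set (ℝ × ℝ) := {p | 0 < p.1 ∧ 0 < p.2 ∧ p.1 + p.2 < c}

lemma measurableSet_openTriangle (c : ℝ) : MeasurableSet (openTriangle c) :=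
  (measurableSet_lt measurable_const measurable_fst).inter
    ((measurableSet_lt measurable_const measurable_snd).inter
      (measurableSet_lt (measurable_fst.add measurable_snd) measurable_const))

lemma volume_setOf_fst_add_snd_eq (c : ℝ) : volume {p : ℝ × ℝ | p.1 + p.2 = c} = 0 := by
  have hfiber : ∀ x : ℝ, Prod.mk x ⁻¹' {p : ℝ × ℝ | p.1 + p.2 = c} = {c - x} := fun x => by
    ext y
    simp only [mem_preimage, mem_ofPred_eq, mem_singleton_iff]
    constructor <;> intro h <;> linarith
  have hmeas : MeasurableSet {p : ℝ × ℝ | p.1 + p.2 = c} :=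
    measurableSet_eq_fun (by fun_prop) measurable_const
  rw [Measure.volume_eq_prod, Measure.prod_apply hmeas]
  simp [hfiber]

lemma Ioo_prod_Ioo_ae_eq_openTriangle_union (c : ℝ) :
    (Ioo 0 c ×ˢ Ioo 0 c : Set (ℝ × ℝ)) =ᵐ[volume]
      (openTriangle c ∪ (fun p => (c, c) - p) ⁻¹' openTriangle c : Set (ℝ × ℝ)) := by
  refine ae_eq_set.mpr ⟨measure_mono_null ?_ (volume_setOf_fst_add_snd_eq c), ?_⟩
  · rintro ⟨x, y⟩ ⟨⟨⟨hx0, hxc⟩, ⟨hy0, hyc⟩⟩, hnot⟩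
    simp only [openTriangle, mem_union, mem_preimage, mem_ofPred_eq, Prod.fst_sub,
      Prod.snd_sub, not_or, not_and, not_lt] at hnot ⊢
    have := hnot.1 hx0 hy0
    have := hnot.2 (by linarith) (by linarith)
    linarith
  · rw [sdiff_eq_empty.mpr, measure_empty]
    rintro ⟨x, y⟩ hp
    simp only [openTriangle, mem_union, mem_ofPred_eq, mem_preimage, Prod.fst_sub,
      Prod.snd_sub] at hp
    rcases hp with ⟨hx, hy, hxy⟩ | ⟨hx, hy, hxy⟩
    · exact ⟨⟨hx, by linarith⟩, ⟨hy, by linarith⟩⟩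
    · exact ⟨⟨by linarith, by linarith⟩, ⟨by linarith, by linarith⟩⟩

lemma setIntegral_Ioo_prod_Ioo_eq_two_mul_setIntegral_openTriangle {F : ℝ × ℝ → ℝ} {c : ℝ}
    (hF : ∀ p, F ((c, c) - p) = F p) (hint : IntegrableOn F (Ioo 0 c ×ˢ Ioo 0 c)) :
    ∫ p in Ioo 0 c ×ˢ Ioo 0 c, F p = 2 * ∫ p in openTriangle c, F p := by
  have hae := Ioo_prod_Ioo_ae_eq_openTriangle_union c
  have hint' : IntegrableOn F (openTriangle c ∪ (fun p => (c, c) - p) ⁻¹' openTriangle c) :=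
    hint.congr_set_ae hae.symm
  have hreflect : ∫ p in (fun p => (c, c) - p) ⁻¹' openTriangle c, F p =
      ∫ p in openTriangle c, F p := by
    simpa only [hF] using (Measure.measurePreserving_sub_left volume ((c, c) : ℝ × ℝ))
      |>.setIntegral_preimage_emb (measurableEmbedding_subLeft _) F (openTriangle c)
  have hdisj : Disjoint (openTriangle c) ((fun p => (c, c) - p) ⁻¹' openTriangle c) := by
    rw [disjoint_left]
    rintro ⟨x, y⟩ ⟨-, -, hxy⟩ ⟨-, -, hxy'⟩
    simp only [Prod.fst_sub, Prod.snd_sub] at hxy'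
    linarith
  rw [setIntegral_congr_set hae, setIntegral_union hdisj
    ((measurableSet_openTriangle c).preimage (measurable_const.sub measurable_id))
    (hint'.mono_set subset_union_left) (hint'.mono_set subset_union_right), hreflect]
  ring

theorem triangle_sides_independent_general (g k : ℝ → ℝ) (hg : Continuous g) (hk : Continuous k) :
    (2 / π ^ 2) * ∫ p in {p : ℝ × ℝ | 0 < p.1 ∧ 0 < p.2 ∧ p.1 + p.2 < π},
      g (2 * Real.sin p.1) * k (2 * Real.sin p.2) =
    (∫ a in (0:ℝ)..2, g a * (2 / (π * Real.sqrt (4 - a ^ 2)))) *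
    (∫ b in (0:ℝ)..2, k b * (2 / (π * Real.sqrt (4 - b ^ 2)))) := by
  have hcont : Continuous fun p : ℝ × ℝ => g (2 * sin p.1) * k (2 * sin p.2) := by fun_prop
  have hsquare := setIntegral_Ioo_prod_Ioo_eq_two_mul_setIntegral_openTriangle (c := π)
    (F := fun p => g (2 * sin p.1) * k (2 * sin p.2)) (by simp [sin_pi_sub])
    ((hcont.continuousOn.integrableOn_compact (isCompact_Icc.prod isCompact_Icc)).mono_set
      (prod_mono Ioo_subset_Icc_self Ioo_subset_Icc_self))
  have hprod : ∫ p in Ioo 0 π ×ˢ Ioo 0 π, g (2 * sin p.1) * k (2 * sin p.2) =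
      (∫ x in Ioo 0 π, g (2 * sin x)) * ∫ x in Ioo 0 π, k (2 * sin x) := by
    rw [Measure.volume_eq_prod]
    exact setIntegral_prod_mul (fun x => g (2 * sin x)) (fun x => k (2 * sin x)) _ _
  rw [hprod, setIntegral_Ioo_zero_pi_comp_two_mul_sin hg,
    setIntegral_Ioo_zero_pi_comp_two_mul_sin hk] at hsquare
  change 2 / π ^ 2 * ∫ p in openTriangle π, g (2 * sin p.1) * k (2 * sin p.2) = _
  rw [div_mul_eq_mul_div, ← hsquare, mul_mul_mul_comm, ← sq,
    mul_div_cancel_left₀ _ (pow_ne_zero 2 pi_ne_zero)]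

theorem triangle_sides_independent (g k : ℝ → ℝ) (hg : Continuous g) (hk : Continuous k)
    (hgb : ∃ C, ∀ x, |g x| ≤ C) (hkb : ∃ C, ∀ x, |k x| ≤ C) :
    (2 / π ^ 2) * ∫ p in {p : ℝ × ℝ | 0 < p.1 ∧ 0 < p.2 ∧ p.1 + p.2 < π},
      g (2 * Real.sin p.1) * k (2 * Real.sin p.2) =
    (∫ a in (0:ℝ)..2, g a * (2 / (π * Real.sqrt (4 - a ^ 2)))) *
    (∫ b in (0:ℝ)..2, k b * (2 / (π * Real.sqrt (4 - b ^ 2)))) :=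
  triangle_sides_independent_general g k hg hk
end

section
/- (2/π²) · ∫₀^π ∫₀^{π−β} 4 sin²α · sin²β · sin²(α + β) dα dβ = 3/8. (That is, the second moment of the area of a uniform cyclic triangle equals 3/8.) -/
open Real intervalIntegral

/-!
The integrand is invariant under `(α, β) ↦ (π - α, π - β)`, which exchanges the triangle
`α + β < π` with the rest of the square `[0, π]²`; so the triangle integral is half the square
integral. On the square, expanding `sin (α + β)` separates the variables, and everything reduces
to `∫₀^π sin⁴ = 3π/8`, `∫₀^π sin² cos² = π/8` and `∫₀^π sin³ cos = 0`, giving `3π²/8` for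
the square.
-/

theorem two_mul_integral_triangle_eq_integral_square_of_symm {f : ℝ → ℝ → ℝ}
    (hf : Continuous f.uncurry) {a : ℝ} (hsymm : ∀ x y, f (a - x) (a - y) = f x y) :
    2 * ∫ y in 0..a, ∫ x in 0..a - y, f x y = ∫ y in 0..a, ∫ x in 0..a, f x y := by
  set G : ℝ → ℝ := fun y ↦ ∫ x in 0..a - y, f x y with hG
  have hG_cont : Continuous G :=
    continuous_parametric_intervalIntegral_of_continuous (f := fun y x ↦ f x y)
      (hf.comp continuous_swap) (continuous_const.sub continuous_id)
  have h_split (y : ℝ) : ∫ x in 0..a, f x y = G y + G (a - y) := by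
    have hint (b c : ℝ) : IntervalIntegrable (fun x ↦ f x y) MeasureTheory.volume b c :=
      (hf.comp (continuous_id.prodMk continuous_const)).intervalIntegrable b c
    rw [← integral_add_adjacent_intervals (hint 0 (a - y)) (hint (a - y) a)]
    have h_reflect (x : ℝ) : f x (a - y) = f (a - x) y := by simpa using hsymm (a - x) y
    simp only [hG, sub_sub_cancel, h_reflect, integral_comp_sub_left (fun x ↦ f x y), sub_zero]
  simp_rw [h_split]
  have hG_reflect_int : IntervalIntegrable (fun y ↦ G (a - y)) MeasureTheory.volume 0 a :=
    (hG_cont.comp (continuous_const.sub continuous_id)).intervalIntegrable _ _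
  rw [integral_add (hG_cont.intervalIntegrable _ _) hG_reflect_int,
    integral_comp_sub_left G, sub_self, sub_zero]
  ring

theorem integral_sin_pow_four_zero_pi : ∫ x in 0..π, sin x ^ 4 = 3 * π / 8 := by
  rw [show 4 = 2 * 2 by norm_num, integral_sin_pow_even]
  norm_num [Finset.prod_range_succ]
  ring

theorem integral_sin_pow_three_mul_cos_zero_pi : ∫ x in 0..π, sin x ^ 3 * cos x = 0 := by
  simpa using integral_sin_pow_mul_cos_pow_odd (a := 0) (b := π) 3 0

theorem integral_sin_sq_mul_cos_sq_zero_pi : ∫ x in 0..π, sin x ^ 2 * cos x ^ 2 = π / 8 := by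
  have h_sin : sin (4 * π) = 0 := by exact_mod_cast sin_nat_mul_pi 4
  simp [integral_sin_sq_mul_cos_sq, h_sin]

theorem integral_sin_sq_mul_sin_add_sq (β : ℝ) :
    ∫ α in 0..π, sin α ^ 2 * sin (α + β) ^ 2 = π / 8 * (1 + 2 * cos β ^ 2) := by
  have h_expand (α : ℝ) : sin α ^ 2 * sin (α + β) ^ 2 =
      cos β ^ 2 * sin α ^ 4 + 2 * sin β * cos β * (sin α ^ 3 * cos α)
        + sin β ^ 2 * (sin α ^ 2 * cos α ^ 2) := by
    rw [sin_add]; ring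
  simp_rw [h_expand]
  have hint {g : ℝ → ℝ} (hg : Continuous g) : IntervalIntegrable g MeasureTheory.volume 0 π :=
    hg.intervalIntegrable 0 π
  rw [integral_add (hint (by fun_prop)) (hint (by fun_prop)),
    integral_add (hint (by fun_prop)) (hint (by fun_prop)), integral_const_mul, integral_const_mul,
    integral_const_mul, integral_sin_pow_four_zero_pi,
    integral_sin_pow_three_mul_cos_zero_pi, integral_sin_sq_mul_cos_sq_zero_pi]
  linear_combination (π / 8) * sin_sq_add_cos_sq β

theorem integral_integral_sin_sq_mul_sin_sq_mul_sin_add_sq :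
    ∫ β in 0..π, ∫ α in 0..π, 4 * sin α ^ 2 * sin β ^ 2 * sin (α + β) ^ 2 = 3 * π ^ 2 / 8 := by
  have h_inner (β : ℝ) : ∫ α in 0..π, 4 * sin α ^ 2 * sin β ^ 2 * sin (α + β) ^ 2 =
      π / 2 * (sin β ^ 2 + 2 * (sin β ^ 2 * cos β ^ 2)) := by
    calc ∫ α in 0..π, 4 * sin α ^ 2 * sin β ^ 2 * sin (α + β) ^ 2
        = 4 * sin β ^ 2 * ∫ α in 0..π, sin α ^ 2 * sin (α + β) ^ 2 := by
          rw [← integral_const_mul]; congr 1; ext α; ring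
      _ = _ := by rw [integral_sin_sq_mul_sin_add_sq]; ring
  simp_rw [h_inner]
  have hint {g : ℝ → ℝ} (hg : Continuous g) : IntervalIntegrable g MeasureTheory.volume 0 π :=
    hg.intervalIntegrable 0 π
  rw [integral_const_mul, integral_add (hint (by fun_prop)) (hint (by fun_prop)), integral_const_mul,
    integral_sin_sq, integral_sin_sq_mul_cos_sq_zero_pi]
  simp only [sin_zero, cos_zero, mul_one, sin_pi, cos_pi, mul_neg, neg_zero, sub_self, zero_add,
    sub_zero]
  ring

theorem triangle_area_second_moment :
    (2 / π ^ 2) * ∫ β in (0:ℝ)..π, ∫ α in (0:ℝ)..(π - β),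
      4 * Real.sin α ^ 2 * Real.sin β ^ 2 * Real.sin (α + β) ^ 2 =
    3 / 8 := by
  have h_symm (α β : ℝ) : 4 * sin (π - α) ^ 2 * sin (π - β) ^ 2 * sin (π - α + (π - β)) ^ 2 =
      4 * sin α ^ 2 * sin β ^ 2 * sin (α + β) ^ 2 := by
    rw [sin_pi_sub, sin_pi_sub, show π - α + (π - β) = -(α + β) + 2 * π by ring,
      sin_add_two_pi, sin_neg, neg_sq]
  have h_cont : Continuous (Function.uncurry fun α β : ℝ ↦
      4 * sin α ^ 2 * sin β ^ 2 * sin (α + β) ^ 2) := by fun_prop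
  rw [div_mul_eq_mul_div, two_mul_integral_triangle_eq_integral_square_of_symm h_cont h_symm,
    integral_integral_sin_sq_mul_sin_sq_mul_sin_add_sq]
  field_simp
end

section
/- For all α, β ∈ [0, π], the Lebesgue measure of the set {ω ∈ [0, π] : α + β > ω, α + ω > β, β + ω > α, and α + β + ω < 2π} equals 2·min{α, π−α, β, π−β}. (Consequently, if (α,β,ω) has the density f = 3/π³ on this tetrahedral region in [0,π]³, then any two of the three angles have the bivariate tent density (6/π³)·min{α, π−α, β, π−β}.) -/
/-!
The triangle inequalities and the perimeter bound confine `ω` to the interval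
`(|α - β|, min (α + β) (2π - (α + β)))`, which already lies in `[0, π]`; its length is
`2 · min {α, π - α, β, π - β}`.
-/

open MeasureTheory Real Set

theorem setOf_triangle_perimeter_eq_Ioo (c α β : ℝ) :
    {ω ∈ Icc (0:ℝ) c | α + β > ω ∧ α + ω > β ∧ β + ω > α ∧ α + β + ω < 2 * c} =
      Ioo |α - β| (min (α + β) (2 * c - (α + β))) := by
  ext ω
  simp only [mem_ofPred_eq, mem_Icc, mem_Ioo, abs_sub_lt_iff, lt_min_iff]
  constructor
  · rintro ⟨-, h₁, h₂, h₃, h₄⟩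
    exact ⟨⟨by linarith, by linarith⟩, h₁, by linarith⟩
  · rintro ⟨⟨h₁, h₂⟩, h₃, h₄⟩
    exact ⟨⟨by linarith [abs_nonneg (α - β)], by linarith⟩, h₃, by linarith, by linarith,
      by linarith⟩

theorem min_perimeter_sub_abs_sub_eq (c a b : ℝ) :
    min (a + b) (2 * c - (a + b)) - |a - b| = 2 * min (min a (c - a)) (min b (c - b)) := by
  simp only [min_def, abs_eq_max_neg, max_def]
  split_ifs <;> linarith

theorem tent_marginal_of_tetrahedron_general (α β : ℝ) :
    volume {ω ∈ Set.Icc (0:ℝ) π |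
        α + β > ω ∧ α + ω > β ∧ β + ω > α ∧ α + β + ω < 2 * π} =
    ENNReal.ofReal (2 * min (min α (π - α)) (min β (π - β))) := by
  rw [setOf_triangle_perimeter_eq_Ioo, Real.volume_Ioo, min_perimeter_sub_abs_sub_eq]

theorem tent_marginal_of_tetrahedron (α β : ℝ)
    (hα : α ∈ Set.Icc 0 π) (hβ : β ∈ Set.Icc 0 π) :
    volume {ω ∈ Set.Icc (0:ℝ) π |
        α + β > ω ∧ α + ω > β ∧ β + ω > α ∧ α + β + ω < 2 * π} =
    ENNReal.ofReal (2 * min (min α (π - α)) (min β (π - β))) :=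
  tent_marginal_of_tetrahedron_general α β
end

section
/- (3/π³) · ∫∫∫ 2 sin α · sin β · sin ω dα dβ dω, taken over the region {(α,β,ω) ∈ [0,π]³ : α + β > ω, α + ω > β, β + ω > α, α + β + ω < 2π}, equals 3/π; moreover (3/π³) · ∫∫∫ 4 sin²α · sin²β · sin²ω dα dβ dω over the same region equals 1/2 + 105/(16π²). (That is, under the density f the mean of the quadrilateral area 2 sin α sin β sin ω is 3/π — twice the mean triangle area 3/(2π) — and its second moment is 1/2 + 105/(16π²).) -/
/-!
In the coordinates `u = β + ω`, `v = ω - β` the region becomes `{|v| < α < min u (2π - u)}`: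
its fibre over `α ∈ (0, π)` is the rectangle `(α, 2π - α) × (-α, α)`, the Jacobian is `1/2`, and
`2 sin β sin ω = cos v - cos u`. Both moments thereby reduce to iterated integrals of powers of
`cos v - cos u` over rectangles, which are elementary.
-/

open MeasureTheory Real

namespace MeasureTheory

theorem setIntegral_fiberwise {X Y E : Type*} [MeasurableSpace X] [MeasurableSpace Y]
    [NormedAddCommGroup E] [NormedSpace ℝ E] {μ : Measure X} {ν : Measure Y} [SFinite μ]
    [SFinite ν] {s : Set X} {t : X → Set Y} (hs : MeasurableSet s)
    (hst : MeasurableSet {z : X × Y | z.1 ∈ s ∧ z.2 ∈ t z.1}) {f : X × Y → E}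
    (hf : IntegrableOn f {z : X × Y | z.1 ∈ s ∧ z.2 ∈ t z.1} (μ.prod ν)) :
    ∫ z in {z : X × Y | z.1 ∈ s ∧ z.2 ∈ t z.1}, f z ∂μ.prod ν =
      ∫ x in s, ∫ y in t x, f (x, y) ∂ν ∂μ := by
  rw [← integral_indicator hst, integral_prod _ ((integrable_indicator_iff hst).2 hf),
    ← integral_indicator hs]
  congr 1 with x
  by_cases hx : x ∈ s
  · have hfiber : Prod.mk x ⁻¹' {z : X × Y | z.1 ∈ s ∧ z.2 ∈ t z.1} = t x := by
      ext y; simp [hx]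
    rw [Set.indicator_of_mem hx, ← integral_indicator (hfiber ▸ measurable_prodMk_left hst)]
    congr 1 with y
    by_cases hy : y ∈ t x <;> simp [hx, hy]
  · simp [Set.indicator, hx]

end MeasureTheory

namespace CyclicQuadrilateral

open Set
open scoped ENNReal

/-- The open tetrahedron with vertices `(0,0,0)`, `(π,π,0)`, `(π,0,π)`, `(0,π,π)`: the box
constraints follow from the strict ones. -/
def angleRegion : Set (ℝ × ℝ × ℝ) := {p : ℝ × ℝ × ℝ |
  p.1 ∈ Set.Icc 0 π ∧ p.2.1 ∈ Set.Icc 0 π ∧ p.2.2 ∈ Set.Icc 0 π ∧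
  p.1 + p.2.1 > p.2.2 ∧ p.1 + p.2.2 > p.2.1 ∧ p.2.1 + p.2.2 > p.1 ∧
  p.1 + p.2.1 + p.2.2 < 2 * π}

noncomputable def ofSumDiff : ℝ × ℝ →ₗ[ℝ] ℝ × ℝ where
  toFun p := ((p.1 - p.2) / 2, (p.1 + p.2) / 2)
  map_add' p q := by ext <;> simp only [Prod.fst_add, Prod.snd_add] <;> ring
  map_smul' c p := by
    ext <;> simp only [Prod.smul_fst, Prod.smul_snd, smul_eq_mul, RingHom.id_apply] <;> ring

theorem det_ofSumDiff : LinearMap.det ofSumDiff = 1 / 2 := by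
  rw [← LinearMap.det_toMatrix (Module.Basis.finTwoProd ℝ), Matrix.det_fin_two]
  norm_num [LinearMap.toMatrix_apply, ofSumDiff]

noncomputable abbrev changeVars : ℝ × ℝ × ℝ →ₗ[ℝ] ℝ × ℝ × ℝ := LinearMap.id.prodMap ofSumDiff

theorem det_changeVars : LinearMap.det changeVars = 1 / 2 := by
  rw [LinearMap.det_prodMap, LinearMap.det_id, det_ofSumDiff, one_mul]

theorem map_changeVars_volume :
    Measure.map changeVars (volume : Measure (ℝ × ℝ × ℝ)) = (2 : ℝ≥0∞) • volume := by
  have : (volume : Measure (ℝ × ℝ × ℝ)).IsAddHaarMeasure := Measure.prod.instIsAddHaarMeasure _ _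
  rw [Measure.map_linearMap_addHaar_eq_smul_addHaar _ (by norm_num [det_changeVars]),
    det_changeVars]
  norm_num

theorem setIntegral_comp_changeVars (f : ℝ × ℝ × ℝ → ℝ) (s : Set (ℝ × ℝ × ℝ)) :
    ∫ q in changeVars ⁻¹' s, f (changeVars q) = 2 * ∫ p in s, f p := by
  have hemb : MeasurableEmbedding changeVars :=
    ((changeVars.equivOfDetNeZero (by norm_num [det_changeVars])
      ).toContinuousLinearEquiv.toHomeomorph).measurableEmbedding
  rw [← hemb.setIntegral_map, map_changeVars_volume, Measure.restrict_smul, integral_smul_measure]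
  norm_num

theorem preimage_changeVars_angleRegion :
    changeVars ⁻¹' angleRegion =
      {q | q.1 ∈ Ioo 0 π ∧ q.2 ∈ Ioo q.1 (2 * π - q.1) ×ˢ Ioo (-q.1) q.1} := by
  ext ⟨α, u, v⟩
  simp only [angleRegion, mem_preimage, LinearMap.prodMap_apply, LinearMap.id_apply, ofSumDiff,
    LinearMap.coe_mk, AddHom.coe_mk, mem_ofPred_eq, mem_Icc, mem_Ioo, mem_prod]
  constructor
  · rintro ⟨-, -, -, h₁, h₂, h₃, h₄⟩
    refine ⟨⟨?_, ?_⟩, ⟨?_, ?_⟩, ?_, ?_⟩ <;> linarith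
  · rintro ⟨-, ⟨h₁, h₂⟩, h₃, h₄⟩
    refine ⟨⟨?_, ?_⟩, ⟨?_, ?_⟩, ⟨?_, ?_⟩, ?_, ?_, ?_, ?_⟩ <;> linarith

theorem integral_angleRegion {f : ℝ × ℝ × ℝ → ℝ} (hf : Continuous f) :
    ∫ p in angleRegion, f p =
      (1 / 2) * ∫ α in 0..π, ∫ u in α..2 * π - α, ∫ v in -α..α,
        f (α, (u - v) / 2, (u + v) / 2) := by
  have hg : Continuous fun q => f (changeVars q) :=
    hf.comp changeVars.continuous_of_finiteDimensional
  have hR : IntegrableOn (fun q => f (changeVars q))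
      {q : ℝ × ℝ × ℝ | q.1 ∈ Ioo 0 π ∧ q.2 ∈ Ioo q.1 (2 * π - q.1) ×ˢ Ioo (-q.1) q.1} := by
    refine (hg.continuousOn.integrableOn_compact
      (isCompact_Icc (a := (0, 0, -π)) (b := (π, 2 * π, π)))).mono_set ?_
    rintro ⟨α, u, v⟩ ⟨⟨h₁, h₂⟩, ⟨h₃, h₄⟩, h₅, h₆⟩
    refine ⟨⟨?_, ?_, ?_⟩, ⟨?_, ?_, ?_⟩⟩ <;> dsimp only <;> linarith
  calc ∫ p in angleRegion, f p
      = (1 / 2) * ∫ q in changeVars ⁻¹' angleRegion, f (changeVars q) := by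
        rw [setIntegral_comp_changeVars]; ring
    _ = (1 / 2) * ∫ α in Ioo 0 π, ∫ z in Ioo α (2 * π - α) ×ˢ Ioo (-α) α,
          f (changeVars (α, z)) := by
        rw [preimage_changeVars_angleRegion, Measure.volume_eq_prod,
          setIntegral_fiberwise (t := fun α => Ioo α (2 * π - α) ×ˢ Ioo (-α) α)
            measurableSet_Ioo (by measurability) hR]
    _ = _ := by
        rw [intervalIntegral.integral_of_le pi_pos.le, integral_Ioc_eq_integral_Ioo]
        refine congrArg _ (setIntegral_congr_fun measurableSet_Ioo fun α ⟨h₀, hπ⟩ => ?_)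
        have hrect : IntegrableOn (fun z => f (changeVars (α, z)))
            (Ioo α (2 * π - α) ×ˢ Ioo (-α) α) :=
          ((hg.comp (Continuous.prodMk_right α)).continuousOn.integrableOn_compact
            (isCompact_Icc (a := (α, -α)) (b := (2 * π - α, α)))).mono_set
            fun z ⟨⟨h₁, h₂⟩, h₃, h₄⟩ => ⟨⟨h₁.le, h₃.le⟩, ⟨h₂.le, h₄.le⟩⟩
        simp_rw [intervalIntegral.integral_of_le (show α ≤ 2 * π - α by linarith),
          intervalIntegral.integral_of_le (show -α ≤ α by linarith), integral_Ioc_eq_integral_Ioo]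
        exact setIntegral_prod _ hrect

theorem two_mul_sin_mul_sin_half (u v : ℝ) :
    2 * sin ((u - v) / 2) * sin ((u + v) / 2) = cos v - cos u := by
  rw [two_mul_sin_mul_sin, show (u - v) / 2 - (u + v) / 2 = -v by ring,
    show (u - v) / 2 + (u + v) / 2 = u by ring, cos_neg]

theorem integral_angleRegion_area_pow (n : ℕ) :
    ∫ p in angleRegion, (2 * sin p.1 * sin p.2.1 * sin p.2.2) ^ n =
      (1 / 2) * ∫ α in 0..π,
        sin α ^ n * ∫ u in α..2 * π - α, ∫ v in -α..α, (cos v - cos u) ^ n := by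
  have harea : ∀ α u v : ℝ, (2 * sin α * sin ((u - v) / 2) * sin ((u + v) / 2)) ^ n =
      sin α ^ n * (cos v - cos u) ^ n := fun α u v => by
    rw [← two_mul_sin_mul_sin_half, ← mul_pow]; ring_nf
  rw [integral_angleRegion (by fun_prop)]
  simp_rw [harea, intervalIntegral.integral_const_mul]

theorem integral_cos_sub_const (a c : ℝ) : ∫ v in -a..a, (cos v - c) = 2 * sin a - 2 * a * c := by
  rw [intervalIntegral.integral_sub intervalIntegral.intervalIntegrable_cos
      intervalIntegrable_const, integral_cos, intervalIntegral.integral_const, sin_neg, smul_eq_mul]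
  ring

theorem integral_sq_cos_sub_const (a c : ℝ) :
    ∫ v in -a..a, (cos v - c) ^ 2 = a + sin a * cos a - 4 * c * sin a + 2 * a * c ^ 2 := by
  have h : ∀ v, (cos v - c) ^ 2 = cos v ^ 2 - 2 * c * cos v + c ^ 2 := fun v => by ring
  simp only [h]
  rw [intervalIntegral.integral_add (Continuous.intervalIntegrable (by fun_prop) _ _)
      intervalIntegrable_const,
    intervalIntegral.integral_sub (Continuous.intervalIntegrable (by fun_prop) _ _)
      (Continuous.intervalIntegrable (by fun_prop) _ _)]
  simp only [integral_cos_sq, integral_cos, intervalIntegral.integral_const_mul,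
    intervalIntegral.integral_const, smul_eq_mul, cos_neg, sin_neg]
  ring

theorem integral_integral_cos_sub_cos (a : ℝ) :
    ∫ u in a..2 * π - a, ∫ v in -a..a, (cos v - cos u) = 4 * π * sin a := by
  simp_rw [integral_cos_sub_const]
  rw [intervalIntegral.integral_sub intervalIntegrable_const
      (Continuous.intervalIntegrable (by fun_prop) _ _),
    intervalIntegral.integral_const, intervalIntegral.integral_const_mul, integral_cos,
    sin_two_pi_sub, smul_eq_mul]
  ring

theorem integral_integral_sq_cos_sub_cos (a : ℝ) :
    ∫ u in a..2 * π - a, ∫ v in -a..a, (cos v - cos u) ^ 2 =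
      4 * π * a - 4 * a ^ 2 + (2 * π - 4 * a) * sin a * cos a + 8 * sin a ^ 2 := by
  simp_rw [integral_sq_cos_sub_const]
  rw [intervalIntegral.integral_add (Continuous.intervalIntegrable (by fun_prop) _ _)
      (Continuous.intervalIntegrable (by fun_prop) _ _),
    intervalIntegral.integral_sub intervalIntegrable_const
      (Continuous.intervalIntegrable (by fun_prop) _ _)]
  simp only [integral_cos_sq, integral_cos, intervalIntegral.integral_const_mul,
    intervalIntegral.integral_mul_const, intervalIntegral.integral_const, smul_eq_mul,
    sin_two_pi_sub, cos_two_pi_sub]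
  ring

theorem integral_sin_sq_mul_integral_integral_sq_cos_sub_cos :
    ∫ a in 0..π, sin a ^ 2 * ∫ u in a..2 * π - a, ∫ v in -a..a, (cos v - cos u) ^ 2 =
      π ^ 3 / 3 + 35 * π / 8 := by
  have hderiv : ∀ x, HasDerivAt (fun a => -(11 / 4) * sin (2 * a)
      + (9 / 16) * sin (2 * a) * cos (2 * a) - (3 / 4) * π * cos (2 * a)
      + (1 / 8) * π * cos (2 * a) ^ 2 + (25 / 8) * a + (3 / 2) * a * cos (2 * a)
      - (1 / 4) * a * cos (2 * a) ^ 2 - π * a * sin (2 * a) + a ^ 2 * sin (2 * a) + π * a ^ 2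
      - (2 / 3) * a ^ 3) (sin x ^ 2 *
      (4 * π * x - 4 * x ^ 2 + (2 * π - 4 * x) * sin x * cos x + 8 * sin x ^ 2)) x := by
    intro x
    refine (hasDerivAt_deriv_iff.2 (by fun_prop)).congr_deriv ?_
    simp (disch := fun_prop) only [deriv_fun_add, deriv_fun_sub, deriv_fun_mul, deriv.fun_neg',
      deriv_const', deriv_const_mul_id', deriv_id'', deriv_fun_pow, _root_.deriv_sin,
      _root_.deriv_cos]
    rw [sin_two_mul, cos_two_mul_eq_one_sub]
    linear_combination (-9 / 2) * sin x ^ 2 * sin_sq_add_cos_sq x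
  simp_rw [integral_integral_sq_cos_sub_cos]
  rw [intervalIntegral.integral_eq_sub_of_hasDerivAt (fun x _ => hderiv x)
    (Continuous.intervalIntegrable (by fun_prop) _ _)]
  simp only [mul_zero, sin_zero, cos_zero, sin_two_pi, cos_two_pi]
  ring

theorem integral_angleRegion_area :
    ∫ p in angleRegion, 2 * sin p.1 * sin p.2.1 * sin p.2.2 = π ^ 2 := by
  have h := integral_angleRegion_area_pow 1
  simp only [pow_one, integral_integral_cos_sub_cos, mul_left_comm (sin _), ← sq,
    intervalIntegral.integral_const_mul, integral_sin_sq] at h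
  rw [h, sin_pi, cos_pi, sin_zero, cos_zero]
  ring

theorem integral_angleRegion_area_sq :
    ∫ p in angleRegion, 4 * sin p.1 ^ 2 * sin p.2.1 ^ 2 * sin p.2.2 ^ 2 =
      π ^ 3 / 6 + 35 * π / 16 := by
  have h := integral_angleRegion_area_pow 2
  rw [integral_sin_sq_mul_integral_integral_sq_cos_sub_cos] at h
  convert h using 1
  · congr 1 with p; ring
  · ring

end CyclicQuadrilateral

theorem quadrilateral_area_moments :
    ((3 / π ^ 3) * ∫ p in {p : ℝ × ℝ × ℝ |
        p.1 ∈ Set.Icc 0 π ∧ p.2.1 ∈ Set.Icc 0 π ∧ p.2.2 ∈ Set.Icc 0 π ∧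
        p.1 + p.2.1 > p.2.2 ∧ p.1 + p.2.2 > p.2.1 ∧ p.2.1 + p.2.2 > p.1 ∧
        p.1 + p.2.1 + p.2.2 < 2 * π},
      2 * Real.sin p.1 * Real.sin p.2.1 * Real.sin p.2.2 = 3 / π) ∧
    ((3 / π ^ 3) * ∫ p in {p : ℝ × ℝ × ℝ |
        p.1 ∈ Set.Icc 0 π ∧ p.2.1 ∈ Set.Icc 0 π ∧ p.2.2 ∈ Set.Icc 0 π ∧
        p.1 + p.2.1 > p.2.2 ∧ p.1 + p.2.2 > p.2.1 ∧ p.2.1 + p.2.2 > p.1 ∧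
        p.1 + p.2.1 + p.2.2 < 2 * π},
      4 * Real.sin p.1 ^ 2 * Real.sin p.2.1 ^ 2 * Real.sin p.2.2 ^ 2 =
      1 / 2 + 105 / (16 * π ^ 2)) := by
  have h₁ := CyclicQuadrilateral.integral_angleRegion_area
  have h₂ := CyclicQuadrilateral.integral_angleRegion_area_sq
  unfold CyclicQuadrilateral.angleRegion at h₁ h₂
  rw [h₁, h₂]
  constructor
  · field_simp
  · field_simp
    ring
end
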